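/- arXiv:1908.07821 — 4 statements merged into one kernel-verified Lean document; each statement's English description precedes it below -/
import Mathlib

section
/- Under Assumption 1, the doubly corrected variance estimator for the one-step linear GMM estimator is consistent regardless of misspecification: V̂_dc(θ̂₁) = (G_n′W_n⁻¹G_n)⁻¹ Σ_n(θ̂₁,W_n) (G_n′W_n⁻¹G_n)⁻¹ converges in probability, as n → ∞, to V₁ = (G′W⁻¹G)⁻¹ E[m₁ᵢm₁ᵢ′] (G′W⁻¹G)⁻¹. -/
open Matrix Filter MeasureTheory ProbabilityTheory

attribute [local instance] Matrix.normedAddCommGroup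

noncomputable section

set_option maxHeartbeats 2000000

open Topology

namespace GMMAux

variable {α : Type*} [MeasurableSpace α]

/-! ### Measurability helpers (entrywise) -/

lemma meas_det {n : Type*} [Fintype n] [DecidableEq n] {f : α → Matrix n n ℝ}
    (hf : ∀ r c, Measurable fun a => f a r c) : Measurable fun a => (f a).det := by
  simp only [Matrix.det_apply]
  refine Finset.measurable_sum _ fun σ _ => ?_
  simp only [Units.smul_def, zsmul_eq_mul]
  exact measurable_const.mul (Finset.measurable_prod _ fun i _ => hf (σ i) i)

lemma meas_inv_entry {n : Type*} [Fintype n] [DecidableEq n] {f : α → Matrix n n ℝ}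
    (hf : ∀ r c, Measurable fun a => f a r c) (r c : n) :
    Measurable fun a => (f a)⁻¹ r c := by
  simp only [Matrix.inv_def, Ring.inverse_eq_inv', Matrix.smul_apply, smul_eq_mul,
    Matrix.adjugate_apply]
  refine ((meas_det hf).inv).mul (meas_det fun i j => ?_)
  rcases eq_or_ne i c with h | h
  · simpa [Matrix.updateRow_apply, h] using measurable_const
  · simpa [Matrix.updateRow_apply, h] using hf i j

lemma meas_mul_entry {m n p : Type*} [Fintype n] {f : α → Matrix m n ℝ} {g : α → Matrix n p ℝ}
    (hf : ∀ r c, Measurable fun a => f a r c) (hg : ∀ r c, Measurable fun a => g a r c)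
    (r : m) (c : p) : Measurable fun a => (f a * g a) r c := by
  simp only [Matrix.mul_apply]
  exact Finset.measurable_sum _ fun j _ => (hf r j).mul (hg j c)

lemma meas_mulVec_entry {m n : Type*} [Fintype n] {f : α → Matrix m n ℝ} {v : α → n → ℝ}
    (hf : ∀ r c, Measurable fun a => f a r c) (hv : ∀ c, Measurable fun a => v a c)
    (r : m) : Measurable fun a => (f a *ᵥ v a) r := by
  simp only [Matrix.mulVec, dotProduct]
  exact Finset.measurable_sum _ fun j _ => (hf r j).mul (hv j)

/-! ### Tendsto helpers for matrices -/


lemma tendsto_entries {X m n : Type*} {l : Filter X} {f : X → Matrix m n ℝ} {A : Matrix m n ℝ}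
    (h : ∀ i j, Tendsto (fun t => f t i j) l (𝓝 (A i j))) : Tendsto f l (𝓝 A) :=
  tendsto_pi_nhds.2 fun i => tendsto_pi_nhds.2 fun j => h i j

lemma entry_tendsto {X m n : Type*} {l : Filter X} {f : X → Matrix m n ℝ} {A : Matrix m n ℝ}
    (h : Tendsto f l (𝓝 A)) (i : m) (j : n) :
    Tendsto (fun t => f t i j) l (𝓝 (A i j)) :=
  tendsto_pi_nhds.1 (tendsto_pi_nhds.1 h i) j

lemma tendsto_matmul {X m n p : Type*} [Fintype n] {l : Filter X}
    {f : X → Matrix m n ℝ} {g : X → Matrix n p ℝ} {A : Matrix m n ℝ} {B : Matrix n p ℝ}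
    (hf : Tendsto f l (𝓝 A)) (hg : Tendsto g l (𝓝 B)) :
    Tendsto (fun x => f x * g x) l (𝓝 (A * B)) := by
  refine tendsto_entries fun i j => ?_
  simp only [Matrix.mul_apply]
  exact tendsto_finset_sum _ fun c _ => (entry_tendsto hf i c).mul (entry_tendsto hg c j)

lemma tendsto_matadd {X m n : Type*} {l : Filter X}
    {f g : X → Matrix m n ℝ} {A B : Matrix m n ℝ}
    (hf : Tendsto f l (𝓝 A)) (hg : Tendsto g l (𝓝 B)) :
    Tendsto (fun x => f x + g x) l (𝓝 (A + B)) := by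
  refine tendsto_entries fun i j => ?_
  simp only [Matrix.add_apply]
  exact (entry_tendsto hf i j).add (entry_tendsto hg i j)

lemma tendsto_vecadd {X n : Type*} {l : Filter X}
    {f g : X → n → ℝ} {A B : n → ℝ}
    (hf : Tendsto f l (𝓝 A)) (hg : Tendsto g l (𝓝 B)) :
    Tendsto (fun x => f x + g x) l (𝓝 (A + B)) := by
  refine tendsto_pi_nhds.2 fun i => ?_
  simp only [Pi.add_apply]
  exact (tendsto_pi_nhds.1 hf i).add (tendsto_pi_nhds.1 hg i)

lemma tendsto_matmulVec {X m n : Type*} [Fintype n] {l : Filter X}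
    {f : X → Matrix m n ℝ} {v : X → n → ℝ} {A : Matrix m n ℝ} {w : n → ℝ}
    (hf : Tendsto f l (𝓝 A)) (hv : Tendsto v l (𝓝 w)) :
    Tendsto (fun x => f x *ᵥ v x) l (𝓝 (A *ᵥ w)) := by
  refine tendsto_pi_nhds.2 fun i => ?_
  simp only [Matrix.mulVec, dotProduct]
  exact tendsto_finset_sum _ fun c _ => (entry_tendsto hf i c).mul (tendsto_pi_nhds.1 hv c)

lemma tendsto_mattrans {X m n : Type*} {l : Filter X}
    {f : X → Matrix m n ℝ} {A : Matrix m n ℝ} (hf : Tendsto f l (𝓝 A)) :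
    Tendsto (fun x => (f x)ᵀ) l (𝓝 Aᵀ) :=
  tendsto_entries fun i j => entry_tendsto hf j i

lemma tendsto_matdet {X n : Type*} [Fintype n] [DecidableEq n] {l : Filter X}
    {f : X → Matrix n n ℝ} {A : Matrix n n ℝ} (hf : Tendsto f l (𝓝 A)) :
    Tendsto (fun x => (f x).det) l (𝓝 A.det) := by
  simp only [Matrix.det_apply, Units.smul_def, zsmul_eq_mul]
  exact tendsto_finset_sum _ fun σ _ =>
    (tendsto_finset_prod _ fun i _ => entry_tendsto hf (σ i) i).const_mul _

lemma tendsto_matinv {X n : Type*} [Fintype n] [DecidableEq n] {l : Filter X}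
    {f : X → Matrix n n ℝ} {A : Matrix n n ℝ} (hf : Tendsto f l (𝓝 A)) (hA : A.det ≠ 0) :
    Tendsto (fun x => (f x)⁻¹) l (𝓝 A⁻¹) := by
  refine tendsto_entries fun i j => ?_
  simp only [Matrix.inv_def, Ring.inverse_eq_inv', Matrix.smul_apply, smul_eq_mul,
    Matrix.adjugate_apply]
  refine ((tendsto_matdet hf).inv₀ hA).mul (tendsto_matdet (tendsto_entries fun i' j' => ?_))
  rcases eq_or_ne i' j with h | h
  · simpa [Matrix.updateRow_apply, h] using tendsto_const_nhds
  · simpa [Matrix.updateRow_apply, h] using entry_tendsto hf i' j'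

/-! ### Quadratic expansion and first-order conditions -/

lemma mulVec_dot {m n : Type*} [Fintype m] [Fintype n] (A : Matrix m n ℝ) (x : n → ℝ)
    (y : m → ℝ) : (A *ᵥ x) ⬝ᵥ y = x ⬝ᵥ (Aᵀ *ᵥ y) := by
  rw [dotProduct_comm, dotProduct_mulVec, Matrix.mulVec_transpose, dotProduct_comm]

lemma quad_expand {q k : Type*} [Fintype q] [Fintype k] (M : Matrix q q ℝ) (e : q → ℝ)
    (Gm : Matrix q k ℝ) (v : k → ℝ) (t : ℝ) :
    (e + Gm *ᵥ (t • v)) ⬝ᵥ (M *ᵥ (e + Gm *ᵥ (t • v)))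
      = e ⬝ᵥ (M *ᵥ e) + t * (v ⬝ᵥ ((Gmᵀ * (M + Mᵀ)) *ᵥ e))
        + t ^ 2 * (v ⬝ᵥ ((Gmᵀ * M * Gm) *ᵥ v)) := by
  have he1 : e ⬝ᵥ (M *ᵥ (Gm *ᵥ v)) = v ⬝ᵥ (Gmᵀ *ᵥ (Mᵀ *ᵥ e)) := by
    rw [dotProduct_comm, mulVec_dot M _ e, mulVec_dot Gm v _]
  have he2 : (Gm *ᵥ v) ⬝ᵥ (M *ᵥ e) = v ⬝ᵥ (Gmᵀ *ᵥ (M *ᵥ e)) := mulVec_dot Gm v _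
  have he3 : (Gm *ᵥ v) ⬝ᵥ (M *ᵥ (Gm *ᵥ v)) = v ⬝ᵥ ((Gmᵀ * M * Gm) *ᵥ v) := by
    rw [mulVec_dot Gm v _, Matrix.mulVec_mulVec, Matrix.mulVec_mulVec, Matrix.mul_assoc]
  have hsplit : (Gmᵀ * (M + Mᵀ)) *ᵥ e = Gmᵀ *ᵥ (M *ᵥ e) + Gmᵀ *ᵥ (Mᵀ *ᵥ e) := by
    rw [← Matrix.mulVec_mulVec, Matrix.add_mulVec, Matrix.mulVec_add]
  rw [Matrix.mulVec_smul, Matrix.mulVec_add, Matrix.mulVec_smul, add_dotProduct,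
    dotProduct_add, dotProduct_add, smul_dotProduct, smul_dotProduct, dotProduct_smul,
    dotProduct_smul, hsplit, dotProduct_add, he1, he2, he3, smul_eq_mul, smul_eq_mul,
    smul_eq_mul]
  simp only [smul_eq_mul]
  ring

lemma foc_nonneg {L C : ℝ} (h : ∀ t : ℝ, 0 ≤ t * L + t ^ 2 * C) : L = 0 := by
  have hC : 0 ≤ C := by have h1 := h 1; have h2 := h (-1); nlinarith
  by_contra hL
  have hL2 : 0 < L ^ 2 := by positivity
  rcases eq_or_lt_of_le hC with hC0 | hCpos
  · have := h (-L); nlinarith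
  · have h3 := h (-(L / (2 * C)))
    have hne : C ≠ 0 := ne_of_gt hCpos
    have h4 : -(L / (2 * C)) * L + (-(L / (2 * C))) ^ 2 * C = -(L ^ 2) / (4 * C) := by
      field_simp; ring
    rw [h4] at h3
    have h5 : (-(L ^ 2) / (4 * C)) * (4 * C) = -(L ^ 2) := by field_simp
    have h6 : 0 ≤ (-(L ^ 2) / (4 * C)) * (4 * C) := mul_nonneg h3 (by positivity)
    rw [h5] at h6
    nlinarith

lemma foc_pos {L C : ℝ} (h : ∀ t : ℝ, t ≠ 0 → 0 < t * L + t ^ 2 * C) : L = 0 ∧ 0 < C := by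
  have hC : 0 < C := by
    have h1 := h 1 one_ne_zero
    have h2 := h (-1) (by norm_num)
    nlinarith
  refine ⟨foc_nonneg (C := C) fun t => ?_, hC⟩
  rcases eq_or_ne t 0 with rfl | ht
  · simp
  · exact (h t ht).le

lemma min_quad {q k : Type*} [Fintype q] [Fintype k] {M : Matrix q q ℝ} {e : q → ℝ}
    {Gm : Matrix q k ℝ}
    (h : ∀ v : k → ℝ, e ⬝ᵥ (M *ᵥ e) ≤ (e + Gm *ᵥ v) ⬝ᵥ (M *ᵥ (e + Gm *ᵥ v))) :
    (Gmᵀ * (M + Mᵀ)) *ᵥ e = 0 := by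
  have key : ∀ v : k → ℝ, v ⬝ᵥ ((Gmᵀ * (M + Mᵀ)) *ᵥ e) = 0 := by
    intro v
    refine foc_nonneg (C := v ⬝ᵥ ((Gmᵀ * M * Gm) *ᵥ v)) fun t => ?_
    have h2 := h (t • v)
    rw [quad_expand] at h2
    linarith
  have h3 := key ((Gmᵀ * (M + Mᵀ)) *ᵥ e)
  rwa [dotProduct_self_eq_zero] at h3

lemma strict_min_quad {q k : Type*} [Fintype q] [Fintype k] {M : Matrix q q ℝ} {e : q → ℝ}
    {Gm : Matrix q k ℝ}
    (h : ∀ v : k → ℝ, v ≠ 0 →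
      e ⬝ᵥ (M *ᵥ e) < (e + Gm *ᵥ v) ⬝ᵥ (M *ᵥ (e + Gm *ᵥ v))) :
    (Gmᵀ * (M + Mᵀ)) *ᵥ e = 0 ∧ ∀ v : k → ℝ, v ≠ 0 → 0 < v ⬝ᵥ ((Gmᵀ * M * Gm) *ᵥ v) := by
  have key : ∀ v : k → ℝ, v ≠ 0 →
      v ⬝ᵥ ((Gmᵀ * (M + Mᵀ)) *ᵥ e) = 0 ∧ 0 < v ⬝ᵥ ((Gmᵀ * M * Gm) *ᵥ v) := by
    intro v hv
    refine foc_pos fun t ht => ?_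
    have h2 := h (t • v) (smul_ne_zero ht hv)
    rw [quad_expand] at h2
    linarith
  constructor
  · by_cases hw : (Gmᵀ * (M + Mᵀ)) *ᵥ e = 0
    · exact hw
    · have h3 := (key _ hw).1
      rw [dotProduct_self_eq_zero] at h3
      exact absurd h3 hw
  · exact fun v hv => (key v hv).2

lemma det_ne_zero_of_pos {k : Type*} [Fintype k] [DecidableEq k] {K : Matrix k k ℝ}
    (h : ∀ v : k → ℝ, v ≠ 0 → 0 < v ⬝ᵥ (K *ᵥ v)) : K.det ≠ 0 := by
  intro hdet
  obtain ⟨v, hv, hKv⟩ := Matrix.exists_mulVec_eq_zero_iff.2 hdet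
  have h2 := h v hv
  rw [hKv] at h2
  simp at h2

/-! ### Matrix algebra helpers -/

lemma sum_mulVec {ι q k : Type*} [Fintype k] (s : Finset ι) (M : ι → Matrix q k ℝ)
    (v : k → ℝ) : (∑ i ∈ s, M i) *ᵥ v = ∑ i ∈ s, (M i *ᵥ v) := by
  ext j
  simp only [Matrix.mulVec, dotProduct, Finset.sum_apply, Matrix.sum_apply,
    Finset.sum_mul]
  rw [Finset.sum_comm]

lemma vecMulVec_conj {k D : Type*} [Fintype D] (A : Matrix k D ℝ) (x : D → ℝ) :
    vecMulVec (A *ᵥ x) (A *ᵥ x) = A * vecMulVec x x * Aᵀ := by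
  ext r c
  simp only [Matrix.vecMulVec_apply, Matrix.mul_apply, Matrix.transpose_apply,
    Matrix.mulVec, dotProduct]
  rw [Finset.sum_mul_sum, Finset.sum_comm]
  refine Finset.sum_congr rfl fun b _ => ?_
  rw [Finset.sum_mul]
  refine Finset.sum_congr rfl fun a _ => ?_
  ring

/-! ### The coefficient matrix of the influence function -/

def NN {q k : ℕ} (Pm : Matrix (Fin k) (Fin q) ℝ) (u : Fin q → ℝ) (d : Fin k → ℝ) :
    Matrix (Fin k) (Fin q ⊕ Fin q × Fin k ⊕ Fin q × Fin q) ℝ :=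
  Matrix.of fun r => Sum.elim (fun j => Pm r j)
    (Sum.elim (fun p => Pm r p.1 * d p.2 + if p.2 = r then u p.1 else 0)
      (fun p => -(Pm r p.1 * u p.2)))

lemma NN_mulVec {q k : ℕ} (Pm : Matrix (Fin k) (Fin q) ℝ) (u : Fin q → ℝ) (d : Fin k → ℝ)
    (gv : Fin q → ℝ) (Bm : Matrix (Fin q) (Fin k) ℝ) (Wm : Matrix (Fin q) (Fin q) ℝ) :
    NN Pm u d *ᵥ Sum.elim gv (Sum.elim (fun p => Bm p.1 p.2) (fun p => Wm p.1 p.2))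
      = Pm *ᵥ gv + Pm *ᵥ (Bm *ᵥ d) + Bmᵀ *ᵥ u - Pm *ᵥ (Wm *ᵥ u) := by
  ext r
  simp only [Matrix.mulVec, dotProduct, NN, Matrix.of_apply, Fintype.sum_sum_type,
    Sum.elim_inl, Sum.elim_inr, Fintype.sum_prod_type, Pi.add_apply, Pi.sub_apply,
    Matrix.transpose_apply, add_mul, ite_mul, zero_mul, Finset.sum_add_distrib]
  have hT1 : ∑ x : Fin q, ∑ y : Fin k, Pm r x * d y * Bm x y
      = ∑ x : Fin q, Pm r x * ∑ y : Fin k, Bm x y * d y := by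
    refine Finset.sum_congr rfl fun x _ => ?_
    rw [Finset.mul_sum]
    exact Finset.sum_congr rfl fun y _ => by ring
  have hT2 : (∑ x : Fin q, ∑ y : Fin k, if y = r then u x * Bm x y else 0)
      = ∑ x : Fin q, Bm x r * u x := by
    refine Finset.sum_congr rfl fun x _ => ?_
    rw [Finset.sum_ite_eq' Finset.univ r (fun y => u x * Bm x y)]
    simp [mul_comm]
  have hT3 : ∑ x : Fin q, ∑ y : Fin q, -(Pm r x * u y) * Wm x y
      = -∑ x : Fin q, Pm r x * ∑ y : Fin q, Wm x y * u y := by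
    rw [← Finset.sum_neg_distrib]
    refine Finset.sum_congr rfl fun x _ => ?_
    rw [Finset.mul_sum, ← Finset.sum_neg_distrib]
    exact Finset.sum_congr rfl fun y _ => by ring
  rw [hT1, hT2, hT3]
  ring

end GMMAux

/-- **Consistency of the doubly corrected variance estimator for the one-step linear GMM
estimator (Theorem 1, second part, j = 1).** Under Assumption 1, regardless of
misspecification, `V̂_dc(θ̂₁) = (G_n′W_n⁻¹G_n)⁻¹ Σ_n(θ̂₁,W_n) (G_n′W_n⁻¹G_n)⁻¹` converges
in probability to `V₁ = (G′W⁻¹G)⁻¹ E[m₁ᵢm₁ᵢ′] (G′W⁻¹G)⁻¹`. -/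
theorem onestep_gmm_doubly_corrected_variance_consistency
    {Ωs : Type*} [MeasurableSpace Ωs] (P : Measure Ωs) [IsProbabilityMeasure P]
    {dx q k : ℕ} (hqk : k < q)
    -- the i.i.d. observations
    (X : ℕ → Ωs → (Fin dx → ℝ)) (hXmeas : ∀ i, Measurable (X i))
    (hindep : iIndepFun X P)
    (hident : ∀ i : ℕ, IdentDistrib (X i) (X 0) P P)
    -- the linear moment function, its Jacobian, and the weight function
    (a : (Fin dx → ℝ) → (Fin q → ℝ)) (ha : Measurable a)
    (B : (Fin dx → ℝ) → Matrix (Fin q) (Fin k) ℝ)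
    (hB : ∀ r c, Measurable fun x => B x r c)
    (Wf : (Fin dx → ℝ) → Matrix (Fin q) (Fin q) ℝ)
    (hWf : ∀ r c, Measurable fun x => Wf x r c)
    (g : (Fin dx → ℝ) → (Fin k → ℝ) → (Fin q → ℝ))
    (hg : ∀ x θ, g x θ = a x + B x *ᵥ θ)
    -- population quantities
    (G : Matrix (Fin q) (Fin k) ℝ) (hG : ∀ r c, G r c = ∫ ω, B (X 0 ω) r c ∂P)
    (W : Matrix (Fin q) (Fin q) ℝ) (hW : ∀ r c, W r c = ∫ ω, Wf (X 0 ω) r c ∂P)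
    (Ωm : (Fin k → ℝ) → Matrix (Fin q) (Fin q) ℝ)
    (hΩm : ∀ θ r c, Ωm θ r c = ∫ ω, g (X 0 ω) θ r * g (X 0 ω) θ c ∂P)
    (Eg : (Fin k → ℝ) → (Fin q → ℝ)) (hEg : ∀ θ r, Eg θ r = ∫ ω, g (X 0 ω) θ r ∂P)
    -- Assumption 1 (i): the pseudo-true values are unique (interiority is automatic
    -- since the parameter space is all of `ℝ^k`)
    (θ1 θ2 : Fin k → ℝ)
    (hθ1 : ∀ θ, θ ≠ θ1 → Eg θ1 ⬝ᵥ (W⁻¹ *ᵥ Eg θ1) < Eg θ ⬝ᵥ (W⁻¹ *ᵥ Eg θ))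
    (hθ2 : ∀ θ, θ ≠ θ2 →
      Eg θ2 ⬝ᵥ ((Ωm θ1)⁻¹ *ᵥ Eg θ2) < Eg θ ⬝ᵥ ((Ωm θ1)⁻¹ *ᵥ Eg θ))
    -- Assumption 1 (iii): `W` and `Ω(θ₁)` are nonsingular
    (hWunit : IsUnit W.det) (hΩunit : IsUnit (Ωm θ1).det)
    -- Assumption 1 (iv): `G` has full column rank
    (hGrank : G.rank = k)
    -- Assumption 1 (v): moment bounds
    (hmom_g1 : Integrable (fun ω => ‖g (X 0 ω) θ1‖ ^ 4) P)
    (hmom_g2 : Integrable (fun ω => ‖g (X 0 ω) θ2‖ ^ 2) P)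
    (hmom_G : Integrable (fun ω => ‖B (X 0 ω)‖ ^ 4) P)
    (hmom_W : Integrable (fun ω => ‖Wf (X 0 ω)‖ ^ 2) P)
    -- sample moments
    (gn : ℕ → (Fin k → ℝ) → Ωs → (Fin q → ℝ))
    (hgn : ∀ n θ ω, gn n θ ω = (n : ℝ)⁻¹ • ∑ i ∈ Finset.range n, g (X i ω) θ)
    (Wn : ℕ → Ωs → Matrix (Fin q) (Fin q) ℝ)
    (hWn : ∀ n ω, Wn n ω = (n : ℝ)⁻¹ • ∑ i ∈ Finset.range n, Wf (X i ω))
    (Gn : ℕ → Ωs → Matrix (Fin q) (Fin k) ℝ)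
    (hGn : ∀ n ω, Gn n ω = (n : ℝ)⁻¹ • ∑ i ∈ Finset.range n, B (X i ω))
    -- the one-step GMM estimator: a measurable minimizer of the one-step criterion
    (θh1 : ℕ → Ωs → (Fin k → ℝ)) (hθh1meas : ∀ n, Measurable (θh1 n))
    (hθh1min : ∀ n ω θ,
      gn n (θh1 n ω) ω ⬝ᵥ ((Wn n ω)⁻¹ *ᵥ gn n (θh1 n ω) ω)
        ≤ gn n θ ω ⬝ᵥ ((Wn n ω)⁻¹ *ᵥ gn n θ ω))
    -- the influence function `m₁ᵢ` (as a function of the observation `x = Xᵢ`)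
    (m1 : (Fin dx → ℝ) → (Fin k → ℝ))
    (hm1 : ∀ x, m1 x = Gᵀ *ᵥ (W⁻¹ *ᵥ g x θ1) + (B x)ᵀ *ᵥ (W⁻¹ *ᵥ Eg θ1)
      - Gᵀ *ᵥ (W⁻¹ *ᵥ (Wf x *ᵥ (W⁻¹ *ᵥ Eg θ1))))
    -- the sample influence functions `mᵢ(θ̂₁, W_n)`
    (ms : ℕ → Ωs → ℕ → (Fin k → ℝ))
    (hms : ∀ n ω i, ms n ω i =
      (Gn n ω)ᵀ *ᵥ ((Wn n ω)⁻¹ *ᵥ g (X i ω) (θh1 n ω))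
        + (B (X i ω))ᵀ *ᵥ ((Wn n ω)⁻¹ *ᵥ gn n (θh1 n ω) ω)
        - (Gn n ω)ᵀ *ᵥ ((Wn n ω)⁻¹ *ᵥ
            (Wf (X i ω) *ᵥ ((Wn n ω)⁻¹ *ᵥ gn n (θh1 n ω) ω))))
    -- `Σ_n(θ̂₁, W_n)` and the doubly corrected variance estimator `V̂_dc(θ̂₁)`
    (Sn : ℕ → Ωs → Matrix (Fin k) (Fin k) ℝ)
    (hSn : ∀ n ω, Sn n ω =
      (n : ℝ)⁻¹ • ∑ i ∈ Finset.range n, vecMulVec (ms n ω i) (ms n ω i))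
    (Vdc1 : ℕ → Ωs → Matrix (Fin k) (Fin k) ℝ)
    (hVdc1 : ∀ n ω, Vdc1 n ω =
      ((Gn n ω)ᵀ * (Wn n ω)⁻¹ * Gn n ω)⁻¹ * Sn n ω
        * ((Gn n ω)ᵀ * (Wn n ω)⁻¹ * Gn n ω)⁻¹)
    -- the asymptotic variance `V₁`
    (V1 : Matrix (Fin k) (Fin k) ℝ)
    (hV1 : V1 = (Gᵀ * W⁻¹ * G)⁻¹
      * Matrix.of (fun r c : Fin k => ∫ ω, m1 (X 0 ω) r * m1 (X 0 ω) c ∂P)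
      * (Gᵀ * W⁻¹ * G)⁻¹) :
    -- conclusion: `V̂_dc(θ̂₁)` converges in probability to `V₁`
    TendstoInMeasure P Vdc1 atTop (fun _ => V1) := by
  
  classical
  set zf : (Fin dx → ℝ) → (Fin q ⊕ Fin q × Fin k ⊕ Fin q × Fin q) → ℝ :=
    fun x => Sum.elim (fun j => g x θ1 j)
      (Sum.elim (fun p => B x p.1 p.2) (fun p => Wf x p.1 p.2)) with hzf_def
  -- pointwise linearity of the moment function
  have g_lin : ∀ (x : Fin dx → ℝ) (θ θ' : Fin k → ℝ), g x θ = g x θ' + B x *ᵥ (θ - θ') := by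
    intro x θ θ'
    rw [hg, hg, Matrix.mulVec_sub]
    abel
  -- measurability of the coordinates of the data vector
  have hgmeas : ∀ (θ : Fin k → ℝ) j, Measurable fun x => g x θ j := by
    intro θ j
    simp only [hg, Pi.add_apply, Matrix.mulVec, dotProduct]
    exact ((measurable_pi_apply j).comp ha).add
      (Finset.measurable_sum _ fun c _ => (hB j c).mul_const _)
  have hzf_meas : ∀ idx, Measurable fun x => zf x idx := by
    rintro (j | p | p)
    · exact hgmeas θ1 j
    · exact hB p.1 p.2
    · exact hWf p.1 p.2
  -- integrability of squares of coordinates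
  have key_sq : ∀ t s : ℝ, |t| ≤ s → t ^ 2 ≤ 1 + s ^ 4 := by
    intro t s h
    have h0 : 0 ≤ s := le_trans (abs_nonneg t) h
    nlinarith [sq_nonneg (s ^ 2 - 1), abs_nonneg t, sq_abs t]
  have hsq_int : ∀ idx, Integrable (fun ω => (zf (X 0 ω) idx) ^ 2) P := by
    rintro (j | p | p)
    · refine Integrable.mono' ((integrable_const 1).add hmom_g1)
        ((((hzf_meas (Sum.inl j)).comp (hXmeas 0)).pow_const 2).aestronglyMeasurable) ?_
      filter_upwards with ω
      have h1 : |g (X 0 ω) θ1 j| ≤ ‖g (X 0 ω) θ1‖ := by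
        simpa using norm_le_pi_norm (g (X 0 ω) θ1) j
      calc ‖(zf (X 0 ω) (Sum.inl j)) ^ 2‖ = (g (X 0 ω) θ1 j) ^ 2 := by
            simp [hzf_def, Real.norm_eq_abs, abs_pow, sq_abs]
        _ ≤ 1 + ‖g (X 0 ω) θ1‖ ^ 4 := key_sq _ _ h1
    · refine Integrable.mono' ((integrable_const 1).add hmom_G)
        ((((hzf_meas (Sum.inr (Sum.inl p))).comp (hXmeas 0)).pow_const 2).aestronglyMeasurable) ?_
      filter_upwards with ω
      have h1 : |B (X 0 ω) p.1 p.2| ≤ ‖B (X 0 ω)‖ := by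
        simpa using Matrix.norm_entry_le_entrywise_sup_norm (B (X 0 ω)) (i := p.1) (j := p.2)
      calc ‖(zf (X 0 ω) (Sum.inr (Sum.inl p))) ^ 2‖ = (B (X 0 ω) p.1 p.2) ^ 2 := by
            simp [hzf_def, Real.norm_eq_abs, abs_pow, sq_abs]
        _ ≤ 1 + ‖B (X 0 ω)‖ ^ 4 := key_sq _ _ h1
    · refine Integrable.mono' hmom_W
        ((((hzf_meas (Sum.inr (Sum.inr p))).comp (hXmeas 0)).pow_const 2).aestronglyMeasurable) ?_
      filter_upwards with ω
      have h1 : |Wf (X 0 ω) p.1 p.2| ≤ ‖Wf (X 0 ω)‖ := by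
        simpa using Matrix.norm_entry_le_entrywise_sup_norm (Wf (X 0 ω)) (i := p.1) (j := p.2)
      calc ‖(zf (X 0 ω) (Sum.inr (Sum.inr p))) ^ 2‖ = |Wf (X 0 ω) p.1 p.2| ^ 2 := by
            simp [hzf_def, Real.norm_eq_abs, abs_pow]
        _ ≤ ‖Wf (X 0 ω)‖ ^ 2 := by
            have h2 : (0:ℝ) ≤ ‖Wf (X 0 ω)‖ := norm_nonneg _
            nlinarith [abs_nonneg (Wf (X 0 ω) p.1 p.2)]
  have hz_int : ∀ idx, Integrable (fun ω => zf (X 0 ω) idx) P := by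
    intro idx
    refine Integrable.mono' ((integrable_const 1).add (hsq_int idx))
      (((hzf_meas idx).comp (hXmeas 0)).aestronglyMeasurable) ?_
    filter_upwards with ω
    have h1 : |zf (X 0 ω) idx| ≤ 1 + (zf (X 0 ω) idx) ^ 2 := by
      nlinarith [abs_nonneg (zf (X 0 ω) idx), sq_abs (zf (X 0 ω) idx)]
    simpa [Real.norm_eq_abs] using h1
  have hzz_int : ∀ p1 p2, Integrable (fun ω => zf (X 0 ω) p1 * zf (X 0 ω) p2) P := by
    intro p1 p2
    refine Integrable.mono' ((hsq_int p1).add (hsq_int p2))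
      ((((hzf_meas p1).comp (hXmeas 0)).mul ((hzf_meas p2).comp (hXmeas 0))).aestronglyMeasurable) ?_
    filter_upwards with ω
    have h1 : |zf (X 0 ω) p1 * zf (X 0 ω) p2| ≤ (zf (X 0 ω) p1) ^ 2 + (zf (X 0 ω) p2) ^ 2 := by
      rw [abs_mul]
      nlinarith [sq_nonneg (|zf (X 0 ω) p1| - |zf (X 0 ω) p2|), sq_abs (zf (X 0 ω) p1),
        sq_abs (zf (X 0 ω) p2), abs_nonneg (zf (X 0 ω) p1), abs_nonneg (zf (X 0 ω) p2)]
    rw [Real.norm_eq_abs]; exact h1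
  have hint_g : ∀ r, Integrable (fun ω => g (X 0 ω) θ1 r) P := fun r => hz_int (Sum.inl r)
  have hint_B : ∀ r c, Integrable (fun ω => B (X 0 ω) r c) P :=
    fun r c => hz_int (Sum.inr (Sum.inl (r, c)))
  -- the strong law of large numbers, specialised
  have slln : ∀ F : (Fin dx → ℝ) → ℝ, Measurable F → Integrable (fun ω => F (X 0 ω)) P →
      ∀ᵐ ω ∂P, Tendsto (fun n : ℕ => (n : ℝ)⁻¹ * ∑ i ∈ Finset.range n, F (X i ω)) atTop
        (𝓝 (∫ ω', F (X 0 ω') ∂P)) := by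
    intro F hF hFi
    have hpair : Pairwise (Function.onFun (IndepFun · · P) fun i ω => F (X i ω)) := fun i j hij =>
      (hindep.indepFun hij).comp hF hF
    have hid : ∀ i : ℕ, IdentDistrib (fun ω => F (X i ω)) (fun ω => F (X 0 ω)) P P :=
      fun i => (hident i).comp hF
    filter_upwards [strong_law_ae_real (fun i ω => F (X i ω)) hFi hpair hid] with ω hω
    simpa [div_eq_inv_mul] using hω
  -- determinants of the population matrices
  have hWdet : W.det ≠ 0 := by
    intro h0
    rw [h0] at hWunit
    exact not_isUnit_zero hWunit
  -- linearity of Eg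
  have Eg_lin : ∀ θ : Fin k → ℝ, Eg θ = Eg θ1 + G *ᵥ (θ - θ1) := by
    intro θ
    funext r
    have hstep : ∀ ω, g (X 0 ω) θ r
        = g (X 0 ω) θ1 r + ∑ c, B (X 0 ω) r c * (θ - θ1) c := by
      intro ω
      rw [g_lin _ θ θ1]
      simp [Matrix.mulVec, dotProduct]
    rw [hEg]
    calc (∫ ω, g (X 0 ω) θ r ∂P)
        = ∫ ω, (g (X 0 ω) θ1 r + ∑ c, B (X 0 ω) r c * (θ - θ1) c) ∂P := by
          simp_rw [hstep]
      _ = (∫ ω, g (X 0 ω) θ1 r ∂P) + ∑ c, (∫ ω, B (X 0 ω) r c ∂P) * (θ - θ1) c := by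
          rw [integral_add (hint_g r)
            (integrable_finset_sum _ fun c _ => (hint_B r c).mul_const _),
            integral_finset_sum _ fun c _ => (hint_B r c).mul_const _]
          congr 1
          exact Finset.sum_congr rfl fun c _ => integral_mul_const _ _
      _ = (Eg θ1 + G *ᵥ (θ - θ1)) r := by
          simp only [Pi.add_apply, Matrix.mulVec, dotProduct, hEg, hG]
  -- population first-order condition and positivity
  have hpophyp : ∀ v : Fin k → ℝ, v ≠ 0 → Eg θ1 ⬝ᵥ (W⁻¹ *ᵥ Eg θ1)
      < (Eg θ1 + G *ᵥ v) ⬝ᵥ (W⁻¹ *ᵥ (Eg θ1 + G *ᵥ v)) := by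
    intro v hv
    have h2 := hθ1 (θ1 + v) (by
      intro hcon
      exact hv (by simpa using congrArg (fun w => w - θ1) hcon))
    rwa [Eg_lin (θ1 + v), add_sub_cancel_left] at h2
  have hpop := GMMAux.strict_min_quad hpophyp
  have hKdet : (Gᵀ * W⁻¹ * G).det ≠ 0 := GMMAux.det_ne_zero_of_pos hpop.2
  have hFdet : (Gᵀ * (W⁻¹ + W⁻¹ᵀ) * G).det ≠ 0 := by
    refine GMMAux.det_ne_zero_of_pos fun v hv => ?_
    have hsplit : (Gᵀ * (W⁻¹ + W⁻¹ᵀ) * G) *ᵥ v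
        = (Gᵀ * W⁻¹ * G) *ᵥ v + (Gᵀ * W⁻¹ᵀ * G) *ᵥ v := by
      rw [← Matrix.add_mulVec, ← Matrix.add_mul, ← Matrix.mul_add]
    have htrans : Gᵀ * W⁻¹ᵀ * G = (Gᵀ * W⁻¹ * G)ᵀ := by
      rw [Matrix.transpose_mul, Matrix.transpose_mul, Matrix.transpose_transpose,
        Matrix.mul_assoc]
    have h2 : v ⬝ᵥ ((Gᵀ * W⁻¹ᵀ * G) *ᵥ v) = v ⬝ᵥ ((Gᵀ * W⁻¹ * G) *ᵥ v) := by
      rw [htrans, ← GMMAux.mulVec_dot, dotProduct_comm]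
    rw [hsplit, dotProduct_add, h2]
    linarith [hpop.2 v hv]
  -- linearity of the sample moments
  have hgn_lin : ∀ (n : ℕ) (θ θ' : Fin k → ℝ) (ω : Ωs),
      gn n θ ω = gn n θ' ω + Gn n ω *ᵥ (θ - θ') := by
    intro n θ θ' ω
    rw [hgn, hgn, hGn, Matrix.smul_mulVec, GMMAux.sum_mulVec, ← smul_add,
      ← Finset.sum_add_distrib]
    congr 1
    exact Finset.sum_congr rfl fun i _ => g_lin (X i ω) θ θ'
  -- the influence function via the coefficient matrix
  have hm1N : ∀ x, m1 x = GMMAux.NN (Gᵀ * W⁻¹) (W⁻¹ *ᵥ Eg θ1) 0 *ᵥ zf x := by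
    intro x
    have h8 := GMMAux.NN_mulVec (Gᵀ * W⁻¹) (W⁻¹ *ᵥ Eg θ1) 0
      (fun j => g x θ1 j) (B x) (Wf x)
    rw [hm1, show zf x = Sum.elim (fun j => g x θ1 j)
      (Sum.elim (fun p => B x p.1 p.2) fun p => Wf x p.1 p.2) from rfl, h8]
    simp [Matrix.mulVec_mulVec, Matrix.mul_assoc]
  set Nlim := GMMAux.NN (Gᵀ * W⁻¹) (W⁻¹ *ᵥ Eg θ1) (0 : Fin k → ℝ) with hNlim_def
  set Zmat : Matrix (Fin q ⊕ Fin q × Fin k ⊕ Fin q × Fin q)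
      (Fin q ⊕ Fin q × Fin k ⊕ Fin q × Fin q) ℝ :=
    Matrix.of fun a b => ∫ ω, zf (X 0 ω) a * zf (X 0 ω) b ∂P with hZmat_def
  have hmat : Matrix.of (fun r c : Fin k => ∫ ω, m1 (X 0 ω) r * m1 (X 0 ω) c ∂P)
      = Nlim * Zmat * Nlimᵀ := by
    ext r c
    simp only [Matrix.of_apply]
    have hpt : ∀ ω, m1 (X 0 ω) r * m1 (X 0 ω) c
        = ∑ pq : (Fin q ⊕ Fin q × Fin k ⊕ Fin q × Fin q) × (Fin q ⊕ Fin q × Fin k ⊕ Fin q × Fin q),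
            (Nlim r pq.1 * Nlim c pq.2) * (zf (X 0 ω) pq.1 * zf (X 0 ω) pq.2) := by
      intro ω
      rw [hm1N]
      simp only [Matrix.mulVec, dotProduct]
      rw [Finset.sum_mul_sum, Fintype.sum_prod_type]
      exact Finset.sum_congr rfl fun a _ => Finset.sum_congr rfl fun b _ => by ring
    calc (∫ ω, m1 (X 0 ω) r * m1 (X 0 ω) c ∂P)
        = ∑ pq : (Fin q ⊕ Fin q × Fin k ⊕ Fin q × Fin q) × (Fin q ⊕ Fin q × Fin k ⊕ Fin q × Fin q),
            (Nlim r pq.1 * Nlim c pq.2) * ∫ ω, zf (X 0 ω) pq.1 * zf (X 0 ω) pq.2 ∂P := by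
          simp_rw [hpt]
          rw [integral_finset_sum _ fun pq _ => ((hzz_int pq.1 pq.2).const_mul _)]
          exact Finset.sum_congr rfl fun pq _ => integral_const_mul _ _
      _ = (Nlim * Zmat * Nlimᵀ) r c := by
          simp only [Matrix.mul_apply, Matrix.transpose_apply, hZmat_def, Matrix.of_apply,
            Finset.sum_mul]
          rw [Fintype.sum_prod_type, Finset.sum_comm]
          exact Finset.sum_congr rfl fun b _ => Finset.sum_congr rfl fun a _ => by ring
  have hV1' : V1 = (Gᵀ * W⁻¹ * G)⁻¹ * (Nlim * Zmat * Nlimᵀ) * (Gᵀ * W⁻¹ * G)⁻¹ := by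
    rw [hV1, hmat]
  -- almost-everywhere convergence of all the sample averages
  have hae1 : ∀ᵐ ω ∂P, ∀ idx, Tendsto
      (fun n : ℕ => (n : ℝ)⁻¹ * ∑ i ∈ Finset.range n, zf (X i ω) idx) atTop
      (𝓝 (∫ ω', zf (X 0 ω') idx ∂P)) :=
    ae_all_iff.2 fun idx => slln _ (hzf_meas idx) (hz_int idx)
  have hae2 : ∀ᵐ ω ∂P, ∀ pq : (Fin q ⊕ Fin q × Fin k ⊕ Fin q × Fin q) ×
      (Fin q ⊕ Fin q × Fin k ⊕ Fin q × Fin q), Tendsto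
      (fun n : ℕ => (n : ℝ)⁻¹ * ∑ i ∈ Finset.range n, zf (X i ω) pq.1 * zf (X i ω) pq.2) atTop
      (𝓝 (∫ ω', zf (X 0 ω') pq.1 * zf (X 0 ω') pq.2 ∂P)) := by
    refine ae_all_iff.2 fun pq => ?_
    exact slln (fun x => zf x pq.1 * zf x pq.2)
      ((hzf_meas pq.1).mul (hzf_meas pq.2)) (hzz_int pq.1 pq.2)
  have hconv : ∀ᵐ ω ∂P, Tendsto (fun n => Vdc1 n ω) atTop (𝓝 V1) := by
    filter_upwards [hae1, hae2] with ω h1 h2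
    have hGt : Tendsto (fun n => Gn n ω) atTop (𝓝 G) := by
      refine GMMAux.tendsto_entries fun r c => ?_
      have h3 := h1 (Sum.inr (Sum.inl (r, c)))
      rw [hG]
      have heq : ∀ n : ℕ, Gn n ω r c
          = (n : ℝ)⁻¹ * ∑ i ∈ Finset.range n, zf (X i ω) (Sum.inr (Sum.inl (r, c))) := by
        intro n
        rw [hGn]
        simp [Matrix.smul_apply, Matrix.sum_apply, hzf_def]
      simpa only [heq, hzf_def, Sum.elim_inl, Sum.elim_inr] using h3
    have hWt : Tendsto (fun n => Wn n ω) atTop (𝓝 W) := by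
      refine GMMAux.tendsto_entries fun r c => ?_
      have h3 := h1 (Sum.inr (Sum.inr (r, c)))
      rw [hW]
      have heq : ∀ n : ℕ, Wn n ω r c
          = (n : ℝ)⁻¹ * ∑ i ∈ Finset.range n, zf (X i ω) (Sum.inr (Sum.inr (r, c))) := by
        intro n
        rw [hWn]
        simp [Matrix.smul_apply, Matrix.sum_apply, hzf_def]
      simpa only [heq, hzf_def, Sum.elim_inl, Sum.elim_inr] using h3
    have hct : Tendsto (fun n => gn n θ1 ω) atTop (𝓝 (Eg θ1)) := by
      refine tendsto_pi_nhds.2 fun r => ?_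
      have h3 := h1 (Sum.inl r)
      rw [hEg]
      have heq : ∀ n : ℕ, gn n θ1 ω r
          = (n : ℝ)⁻¹ * ∑ i ∈ Finset.range n, zf (X i ω) (Sum.inl r) := by
        intro n
        rw [hgn]
        simp [Pi.smul_apply, Finset.sum_apply, hzf_def]
      simpa only [heq, hzf_def, Sum.elim_inl] using h3
    have hZt : Tendsto (fun n : ℕ => (n : ℝ)⁻¹ • ∑ i ∈ Finset.range n,
        vecMulVec (zf (X i ω)) (zf (X i ω))) atTop (𝓝 Zmat) := by
      refine GMMAux.tendsto_entries fun a b => ?_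
      have h3 := h2 (a, b)
      have heq : ∀ n : ℕ, ((n : ℝ)⁻¹ • ∑ i ∈ Finset.range n,
          vecMulVec (zf (X i ω)) (zf (X i ω))) a b
          = (n : ℝ)⁻¹ * ∑ i ∈ Finset.range n, zf (X i ω) a * zf (X i ω) b := by
        intro n
        simp [Matrix.smul_apply, Matrix.sum_apply, Matrix.vecMulVec_apply]
      simpa only [heq, hZmat_def, Matrix.of_apply] using h3
    have hMt := GMMAux.tendsto_matinv hWt hWdet
    have hPt : Tendsto (fun n => (Gn n ω)ᵀ * (Wn n ω)⁻¹) atTop (𝓝 (Gᵀ * W⁻¹)) :=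
      GMMAux.tendsto_matmul (GMMAux.tendsto_mattrans hGt) hMt
    have hKt : Tendsto (fun n => (Gn n ω)ᵀ * (Wn n ω)⁻¹ * Gn n ω) atTop
        (𝓝 (Gᵀ * W⁻¹ * G)) := GMMAux.tendsto_matmul hPt hGt
    have hAt : Tendsto (fun n => (Gn n ω)ᵀ * ((Wn n ω)⁻¹ + ((Wn n ω)⁻¹)ᵀ)) atTop
        (𝓝 (Gᵀ * (W⁻¹ + W⁻¹ᵀ))) :=
      GMMAux.tendsto_matmul (GMMAux.tendsto_mattrans hGt)
        (GMMAux.tendsto_matadd hMt (GMMAux.tendsto_mattrans hMt))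
    have hFt : Tendsto (fun n => (Gn n ω)ᵀ * ((Wn n ω)⁻¹ + ((Wn n ω)⁻¹)ᵀ) * Gn n ω) atTop
        (𝓝 (Gᵀ * (W⁻¹ + W⁻¹ᵀ) * G)) := GMMAux.tendsto_matmul hAt hGt
    have hbt : Tendsto (fun n => ((Gn n ω)ᵀ * ((Wn n ω)⁻¹ + ((Wn n ω)⁻¹)ᵀ)) *ᵥ gn n θ1 ω)
        atTop (𝓝 0) := by
      have h4 := GMMAux.tendsto_matmulVec hAt hct
      rwa [hpop.1] at h4
    have hFOC : ∀ n, ((Gn n ω)ᵀ * ((Wn n ω)⁻¹ + ((Wn n ω)⁻¹)ᵀ) * Gn n ω) *ᵥ (θh1 n ω - θ1)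
        = -(((Gn n ω)ᵀ * ((Wn n ω)⁻¹ + ((Wn n ω)⁻¹)ᵀ)) *ᵥ gn n θ1 ω) := by
      intro n
      have hmin : ∀ v : Fin k → ℝ, gn n (θh1 n ω) ω ⬝ᵥ ((Wn n ω)⁻¹ *ᵥ gn n (θh1 n ω) ω)
          ≤ (gn n (θh1 n ω) ω + Gn n ω *ᵥ v) ⬝ᵥ
            ((Wn n ω)⁻¹ *ᵥ (gn n (θh1 n ω) ω + Gn n ω *ᵥ v)) := by
        intro v
        have h5 := hθh1min n ω (θh1 n ω + v)
        rwa [hgn_lin n (θh1 n ω + v) (θh1 n ω) ω, add_sub_cancel_left] at h5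
      have h0 := GMMAux.min_quad hmin
      rw [hgn_lin n (θh1 n ω) θ1 ω, Matrix.mulVec_add, Matrix.mulVec_mulVec, add_comm] at h0
      exact eq_neg_of_add_eq_zero_left h0
    have hdetev : ∀ᶠ n in atTop,
        ((Gn n ω)ᵀ * ((Wn n ω)⁻¹ + ((Wn n ω)⁻¹)ᵀ) * Gn n ω).det ≠ 0 :=
      (GMMAux.tendsto_matdet hFt).eventually_ne hFdet
    have hdt : Tendsto (fun n => θh1 n ω - θ1) atTop (𝓝 0) := by
      have h6 : Tendsto (fun n => ((Gn n ω)ᵀ * ((Wn n ω)⁻¹ + ((Wn n ω)⁻¹)ᵀ) * Gn n ω)⁻¹ *ᵥ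
          (-(((Gn n ω)ᵀ * ((Wn n ω)⁻¹ + ((Wn n ω)⁻¹)ᵀ)) *ᵥ gn n θ1 ω))) atTop
          (𝓝 ((Gᵀ * (W⁻¹ + W⁻¹ᵀ) * G)⁻¹ *ᵥ (-0))) :=
        GMMAux.tendsto_matmulVec (GMMAux.tendsto_matinv hFt hFdet) hbt.neg
      rw [neg_zero, Matrix.mulVec_zero] at h6
      refine Filter.Tendsto.congr' ?_ h6
      filter_upwards [hdetev] with n hn
      rw [← hFOC n, Matrix.mulVec_mulVec,
        Matrix.nonsing_inv_mul _ (isUnit_iff_ne_zero.2 hn), Matrix.one_mulVec]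
    have hut : Tendsto (fun n => (Wn n ω)⁻¹ *ᵥ gn n (θh1 n ω) ω) atTop
        (𝓝 (W⁻¹ *ᵥ Eg θ1)) := by
      have h7 : Tendsto (fun n => (Wn n ω)⁻¹ *ᵥ (gn n θ1 ω + Gn n ω *ᵥ (θh1 n ω - θ1)))
          atTop (𝓝 (W⁻¹ *ᵥ (Eg θ1 + G *ᵥ 0))) :=
        GMMAux.tendsto_matmulVec hMt
          (GMMAux.tendsto_vecadd hct (GMMAux.tendsto_matmulVec hGt hdt))
      rw [Matrix.mulVec_zero, add_zero] at h7
      refine Filter.Tendsto.congr (fun n => ?_) h7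
      rw [← hgn_lin n (θh1 n ω) θ1 ω]
    have hNt : Tendsto (fun n => GMMAux.NN ((Gn n ω)ᵀ * (Wn n ω)⁻¹)
        ((Wn n ω)⁻¹ *ᵥ gn n (θh1 n ω) ω) (θh1 n ω - θ1)) atTop (𝓝 Nlim) := by
      rw [hNlim_def]
      refine GMMAux.tendsto_entries fun r idx => ?_
      rcases idx with j | ⟨j, c⟩ | ⟨j, l⟩
      · simpa only [GMMAux.NN, Matrix.of_apply, Sum.elim_inl] using
          GMMAux.entry_tendsto hPt r j
      · simp only [GMMAux.NN, Matrix.of_apply, Sum.elim_inr, Sum.elim_inl]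
        have hmul : Tendsto (fun n => ((Gn n ω)ᵀ * (Wn n ω)⁻¹) r j * (θh1 n ω - θ1) c)
            atTop (𝓝 ((Gᵀ * W⁻¹) r j * (0 : Fin k → ℝ) c)) :=
          (GMMAux.entry_tendsto hPt r j).mul (tendsto_pi_nhds.1 hdt c)
        rcases eq_or_ne c r with hcr | hcr
        · simp only [if_pos hcr]
          exact hmul.add (tendsto_pi_nhds.1 hut j)
        · simp only [if_neg hcr]
          exact hmul.add tendsto_const_nhds
      · simp only [GMMAux.NN, Matrix.of_apply, Sum.elim_inr]
        exact ((GMMAux.entry_tendsto hPt r j).mul (tendsto_pi_nhds.1 hut l)).neg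
    have hms_eq : ∀ n i, ms n ω i
        = GMMAux.NN ((Gn n ω)ᵀ * (Wn n ω)⁻¹) ((Wn n ω)⁻¹ *ᵥ gn n (θh1 n ω) ω)
            (θh1 n ω - θ1) *ᵥ zf (X i ω) := by
      intro n i
      have h8 := GMMAux.NN_mulVec ((Gn n ω)ᵀ * (Wn n ω)⁻¹)
        ((Wn n ω)⁻¹ *ᵥ gn n (θh1 n ω) ω) (θh1 n ω - θ1)
        (fun j => g (X i ω) θ1 j) (B (X i ω)) (Wf (X i ω))
      rw [hms, show zf (X i ω) = Sum.elim (fun j => g (X i ω) θ1 j)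
        (Sum.elim (fun p => B (X i ω) p.1 p.2) fun p => Wf (X i ω) p.1 p.2) from rfl, h8]
      rw [g_lin (X i ω) (θh1 n ω) θ1]
      simp only [Matrix.mulVec_mulVec, Matrix.mulVec_add, Matrix.mul_assoc]
    have hSn_eq : ∀ n, Sn n ω
        = GMMAux.NN ((Gn n ω)ᵀ * (Wn n ω)⁻¹) ((Wn n ω)⁻¹ *ᵥ gn n (θh1 n ω) ω) (θh1 n ω - θ1)
          * ((n : ℝ)⁻¹ • ∑ i ∈ Finset.range n, vecMulVec (zf (X i ω)) (zf (X i ω)))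
          * (GMMAux.NN ((Gn n ω)ᵀ * (Wn n ω)⁻¹) ((Wn n ω)⁻¹ *ᵥ gn n (θh1 n ω) ω)
              (θh1 n ω - θ1))ᵀ := by
      intro n
      rw [hSn]
      rw [Finset.sum_congr rfl fun i (_ : i ∈ Finset.range n) => by
        rw [hms_eq n i, GMMAux.vecMulVec_conj]]
      rw [← Matrix.sum_mul, ← Matrix.mul_sum, Matrix.mul_smul, Matrix.smul_mul]
    have hSt : Tendsto (fun n => Sn n ω) atTop (𝓝 (Nlim * Zmat * Nlimᵀ)) := by
      simp only [hSn_eq]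
      exact GMMAux.tendsto_matmul (GMMAux.tendsto_matmul hNt hZt)
        (GMMAux.tendsto_mattrans hNt)
    rw [hV1']
    have hVt : Tendsto (fun n => Vdc1 n ω) atTop
        (𝓝 ((Gᵀ * W⁻¹ * G)⁻¹ * (Nlim * Zmat * Nlimᵀ) * (Gᵀ * W⁻¹ * G)⁻¹)) := by
      simp only [hVdc1]
      exact GMMAux.tendsto_matmul (GMMAux.tendsto_matmul
        (GMMAux.tendsto_matinv hKt hKdet) hSt) (GMMAux.tendsto_matinv hKt hKdet)
    exact hVt
  -- measurability of the estimator
  have hmeas : ∀ n, AEStronglyMeasurable (Vdc1 n) P := by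
    intro n
    letI : MeasurableSpace (Matrix (Fin k) (Fin k) ℝ) := MeasurableSpace.pi
    letI : BorelSpace (Matrix (Fin k) (Fin k) ℝ) := Pi.borelSpace
    letI : SecondCountableTopology (Matrix (Fin k) (Fin k) ℝ) :=
      inferInstanceAs (SecondCountableTopology (Fin k → Fin k → ℝ))
    have hGnE : ∀ r c, Measurable fun ω => Gn n ω r c := by
      intro r c
      simp only [hGn, Matrix.smul_apply, Matrix.sum_apply, smul_eq_mul]
      exact (Finset.measurable_sum _ fun i _ => (hB r c).comp (hXmeas i)).const_mul _
    have hWnE : ∀ r c, Measurable fun ω => Wn n ω r c := by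
      intro r c
      simp only [hWn, Matrix.smul_apply, Matrix.sum_apply, smul_eq_mul]
      exact (Finset.measurable_sum _ fun i _ => (hWf r c).comp (hXmeas i)).const_mul _
    have hMnE : ∀ r c, Measurable fun ω => (Wn n ω)⁻¹ r c := GMMAux.meas_inv_entry hWnE
    have hθE : ∀ c, Measurable fun ω => θh1 n ω c :=
      fun c => (measurable_pi_apply c).comp (hθh1meas n)
    have hgiE : ∀ (i : ℕ) j, Measurable fun ω => g (X i ω) (θh1 n ω) j := by
      intro i j
      simp only [hg, Pi.add_apply, Matrix.mulVec, dotProduct]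
      exact ((measurable_pi_apply j).comp (ha.comp (hXmeas i))).add
        (Finset.measurable_sum _ fun c _ => ((hB j c).comp (hXmeas i)).mul (hθE c))
    have hgnE : ∀ j, Measurable fun ω => gn n (θh1 n ω) ω j := by
      intro j
      simp only [hgn, Pi.smul_apply, Finset.sum_apply, smul_eq_mul]
      exact (Finset.measurable_sum _ fun i _ => hgiE i j).const_mul _
    have hunE : ∀ j, Measurable fun ω => ((Wn n ω)⁻¹ *ᵥ gn n (θh1 n ω) ω) j :=
      GMMAux.meas_mulVec_entry hMnE hgnE
    have hGTE : ∀ r c, Measurable fun ω => (Gn n ω)ᵀ r c := fun r c => hGnE c r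
    have hPnE : ∀ r c, Measurable fun ω => ((Gn n ω)ᵀ * (Wn n ω)⁻¹) r c :=
      GMMAux.meas_mul_entry hGTE hMnE
    have hmsE : ∀ (i : ℕ) r, Measurable fun ω => ms n ω i r := by
      intro i r
      simp only [hms, Pi.sub_apply, Pi.add_apply]
      have hBE : ∀ r' c', Measurable fun ω => B (X i ω) r' c' :=
        fun r' c' => (hB r' c').comp (hXmeas i)
      have hWfE : ∀ r' c', Measurable fun ω => Wf (X i ω) r' c' :=
        fun r' c' => (hWf r' c').comp (hXmeas i)
      refine Measurable.sub (Measurable.add ?_ ?_) ?_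
      · exact GMMAux.meas_mulVec_entry hGTE
          (GMMAux.meas_mulVec_entry hMnE (hgiE i)) r
      · exact GMMAux.meas_mulVec_entry (fun r' c' => hBE c' r') hunE r
      · exact GMMAux.meas_mulVec_entry hGTE
          (GMMAux.meas_mulVec_entry hMnE
            (GMMAux.meas_mulVec_entry hWfE hunE)) r
    have hSnE : ∀ r c, Measurable fun ω => Sn n ω r c := by
      intro r c
      simp only [hSn, Matrix.smul_apply, Matrix.sum_apply, smul_eq_mul,
        Matrix.vecMulVec_apply]
      exact (Finset.measurable_sum _ fun i _ => (hmsE i r).mul (hmsE i c)).const_mul _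
    have hKnE : ∀ r c, Measurable fun ω => ((Gn n ω)ᵀ * (Wn n ω)⁻¹ * Gn n ω) r c :=
      GMMAux.meas_mul_entry hPnE hGnE
    have hKinvE : ∀ r c, Measurable fun ω => ((Gn n ω)ᵀ * (Wn n ω)⁻¹ * Gn n ω)⁻¹ r c :=
      GMMAux.meas_inv_entry hKnE
    have hVE : Measurable (Vdc1 n) := by
      refine measurable_pi_lambda _ fun r => measurable_pi_lambda _ fun c => ?_
      simp only [hVdc1]
      exact GMMAux.meas_mul_entry (GMMAux.meas_mul_entry hKinvE hSnE) hKinvE r c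
    exact hVE.aestronglyMeasurable
  exact tendstoInMeasure_of_tendsto_ae hmeas hconv
end
end

section
/- Stochastic expansion of the one-step GMM estimator under local misspecification: suppose g̃ = O_p(1), G̃ = O_p(1), W̃ = O_p(1), the first-order condition G_n′W_n⁻¹g_n(θ̂₁) = 0 holds with probability approaching one, G has full column rank, W is positive definite, and the second moments of g(X_{in},θ₀), G(X_{in}), W(X_{in}) exist and are finite. Then, with probability approaching one, √n(θ̂₁ − θ₀) = η_W + ψ̃_{W,0} + n^{−1/2}(ψ̃_{W,1} + q̃_W + B̃_W(η_W + ψ̃_{W,0})) + O_p(n⁻¹), where η_W = −(G′W⁻¹G)⁻¹G′W⁻¹δ, ψ̃_{W,0} = −(G′W⁻¹G)⁻¹G′W⁻¹g̃, ψ̃_{W,1} = −(G′W⁻¹G)⁻¹(G̃′W⁻¹δ − G′W⁻¹W̃W⁻¹δ), q̃_W = −(G′W⁻¹G)⁻¹(G̃′W⁻¹g̃ − G′W⁻¹W̃W⁻¹g̃), B̃_W = −(G′W⁻¹G)⁻¹(G̃′W⁻¹G − G′W⁻¹W̃W⁻¹G + G′W⁻¹G̃). -/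
open Matrix Filter MeasureTheory ProbabilityTheory

attribute [local instance] Matrix.normedAddCommGroup

noncomputable section

/-- `Z_n = O_p(a_n)`: the sequence `{Z_n / a_n}` is bounded in probability — for every
`ε > 0` there is `M > 0` with `P(‖Z_n‖ / a_n > M) < ε` for all sufficiently large `n`. -/
def IsBigOp {Ωs : Type*} [MeasurableSpace Ωs] (P : Measure Ωs)
    {E : Type*} [Norm E] (Z : ℕ → Ωs → E) (a : ℕ → ℝ) : Prop :=
  ∀ ε : ℝ, 0 < ε → ∃ M : ℝ, 0 < M ∧
    ∀ᶠ n in atTop, P {ω | M < ‖Z n ω‖ / a n} < ENNReal.ofReal ε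

open Topology

/-!
Write `s = n^{-1/2}`. By definition of the centered processes, `G_n = G + s G̃`,
`W_n = W + s W̃` and `g_n(θ₀) = s (δ + g̃)`; since `g` is linear in `θ`, the first-order condition
says exactly that `√n (θ̂₁ - θ₀)` solves the normal equations of the linear GMM problem with data
`(G + s G̃, W + s W̃, δ + g̃)`. Expanding their solution at `s = 0` gives
`η_W + ψ̃_{W,0} + s (ψ̃_{W,1} + q̃_W + B̃_W (η_W + ψ̃_{W,0}))` plus `s²` times a function that is
continuous at `s = 0`, hence bounded uniformly for `s` small and `(g̃, G̃, W̃)` in a compact set.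
As `(g̃, G̃, W̃) = O_p(1)` and the first-order condition holds w.p.a.1, the remainder is
`O_p(s²) = O_p(n⁻¹)`.
-/

instance Matrix.properSpace {m n : Type*} [Fintype m] [Fintype n] :
    ProperSpace (Matrix m n ℝ) :=
  pi_properSpace

theorem Matrix.mulVec_injective_of_rank_eq {K m n : Type*} [Field K] [Fintype m] [Fintype n]
    [DecidableEq n] {G : Matrix m n K} (hG : G.rank = Fintype.card n) :
    Function.Injective G.mulVec := by
  have hdim : Module.finrank K (n → K) = Module.finrank K (LinearMap.range G.mulVecLin) := by
    rw [Module.finrank_fintype_fun_eq_card]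
    exact hG.symm
  exact (LinearMap.injective_rangeRestrict_iff _).mp
    ((LinearMap.injective_iff_surjective_of_finrank_eq_finrank hdim).mpr
      G.mulVecLin.surjective_rangeRestrict)

theorem Matrix.PosDef.transpose_mul_inv_mul {m n : Type*} [Fintype m] [DecidableEq m]
    [Fintype n] [DecidableEq n] {W : Matrix m m ℝ} (hW : W.PosDef) {G : Matrix m n ℝ}
    (hG : G.rank = Fintype.card n) : (Gᵀ * W⁻¹ * G).PosDef := by
  simpa only [conjTranspose_eq_transpose_of_trivial] using
    hW.inv.conjTranspose_mul_mul_same (G.mulVec_injective_of_rank_eq hG)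

theorem Matrix.inv_add_smul_eq_inv_sub {K m : Type*} [Field K] [Fintype m] [DecidableEq m]
    {W : Matrix m m K} (z : Matrix m m K) (s : K) (hW : IsUnit W.det)
    (hWs : IsUnit (W + s • z).det) :
    (W + s • z)⁻¹ = W⁻¹ - s • (W⁻¹ * z * (W + s • z)⁻¹) := by
  have h : W⁻¹ * (W + s • z) * (W + s • z)⁻¹ = W⁻¹ := by
    rw [Matrix.mul_assoc, mul_nonsing_inv _ hWs, Matrix.mul_one]
  rw [Matrix.mul_add, nonsing_inv_mul _ hW, Matrix.add_mul, Matrix.one_mul, Matrix.mul_smul,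
    Matrix.smul_mul] at h
  exact eq_sub_of_add_eq h

section LinearGMM

variable {K m n : Type*} [Field K] [Fintype m] [DecidableEq m] [Fintype n]

/-- Half the gradient of `θ ↦ (v + G θ)ᵀ W⁻¹ (v + G θ)`. -/
def gmmScore (G : Matrix m n K) (W : Matrix m m K) (v : m → K) (θ : n → K) : n → K :=
  Gᵀ *ᵥ (W⁻¹ *ᵥ (v + G *ᵥ θ))

theorem gmmScore_eq (G : Matrix m n K) (W : Matrix m m K) (v : m → K) (θ : n → K) :
    gmmScore G W v θ = Gᵀ *ᵥ (W⁻¹ *ᵥ v) + (Gᵀ * W⁻¹ * G) *ᵥ θ := by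
  simp only [gmmScore, mulVec_add, mulVec_mulVec, Matrix.mul_assoc]

theorem gmmScore_smul (G : Matrix m n K) (W : Matrix m m K) (c : K) (v : m → K) (θ : n → K) :
    gmmScore G W (c • v) (c • θ) = c • gmmScore G W v θ := by
  simp only [gmmScore, mulVec_smul, ← smul_add]

theorem gmmScore_centered_eq_zero {c : K} (hc : c ≠ 0) {G G' y : Matrix m n K}
    {W W' z : Matrix m m K} {δ v v' : m → K} {θ : n → K} (hy : y = c • (G' - G))
    (hz : z = c • (W' - W)) (hv : v = c • (v' - c⁻¹ • δ)) (h : gmmScore G' W' v' θ = 0) :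
    gmmScore (G + c⁻¹ • y) (W + c⁻¹ • z) (δ + v) (c • θ) = 0 := by
  refine (smul_eq_zero.mp ?_).resolve_left (inv_ne_zero hc)
  rw [← gmmScore_smul, smul_smul, inv_mul_cancel₀ hc, one_smul, hy, hz, hv, smul_add]
  simpa only [smul_smul, inv_mul_cancel₀ hc, one_smul, add_sub_cancel] using h

variable [DecidableEq n]

def gmmSolution (G : Matrix m n K) (W : Matrix m m K) (v : m → K) : n → K :=
  -((Gᵀ * W⁻¹ * G)⁻¹ *ᵥ (Gᵀ *ᵥ (W⁻¹ *ᵥ v)))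

/-- The first-order term of `gmmSolution (G + s • y) (W + s • z) v` in `s`; for `v = δ + g̃`,
`y = G̃`, `z = W̃` it is `ψ̃_{W,1} + q̃_W + B̃_W (η_W + ψ̃_{W,0})`. -/
def gmmCorrection (G : Matrix m n K) (W : Matrix m m K) (v : m → K) (y : Matrix m n K)
    (z : Matrix m m K) : n → K :=
  -((Gᵀ * W⁻¹ * G)⁻¹ *ᵥ (yᵀ *ᵥ (W⁻¹ *ᵥ v) - Gᵀ *ᵥ (W⁻¹ *ᵥ (z *ᵥ (W⁻¹ *ᵥ v)))))
  + (-((Gᵀ * W⁻¹ * G)⁻¹ *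
      (yᵀ * W⁻¹ * G - Gᵀ * W⁻¹ * z * W⁻¹ * G + Gᵀ * W⁻¹ * y))) *ᵥ gmmSolution G W v

/-- `T` stands for `(W + s • z)⁻¹`; keeping it a free argument makes the remainder a polynomial
map. -/
def gmmRemainder (G : Matrix m n K) (W : Matrix m m K) (v : m → K) (y : Matrix m n K)
    (z : Matrix m m K) (s : K) (T : Matrix m m K) : n → K :=
  let h := gmmSolution G W v
  let t := gmmCorrection G W v y z
  (yᵀ - Gᵀ * W⁻¹ * z) *ᵥ (T *ᵥ (y *ᵥ h + (G + s • y) *ᵥ t) - W⁻¹ *ᵥ (z *ᵥ (T *ᵥ (v + G *ᵥ h))))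
    + Gᵀ *ᵥ (W⁻¹ *ᵥ (y *ᵥ t))

variable {G y : Matrix m n K} {W z : Matrix m m K}

theorem sub_gmmSolution_eq (hA : IsUnit (Gᵀ * W⁻¹ * G).det) (v : m → K) (θ : n → K) :
    θ - gmmSolution G W v = (Gᵀ * W⁻¹ * G)⁻¹ *ᵥ gmmScore G W v θ := by
  rw [gmmScore_eq, mulVec_add, mulVec_mulVec θ, nonsing_inv_mul _ hA, one_mulVec, gmmSolution,
    sub_neg_eq_add, add_comm]

theorem gmmScore_gmmSolution (hA : IsUnit (Gᵀ * W⁻¹ * G).det) (v : m → K) :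
    gmmScore G W v (gmmSolution G W v) = 0 := by
  rw [gmmScore_eq, gmmSolution, mulVec_neg, mulVec_mulVec (Gᵀ *ᵥ (W⁻¹ *ᵥ v)),
    mul_nonsing_inv _ hA, one_mulVec, add_neg_cancel]

theorem gmmSolution_add (v w : m → K) :
    gmmSolution G W (v + w) = gmmSolution G W v + gmmSolution G W w := by
  simp only [gmmSolution, mulVec_add, neg_add]

/-- The coefficient of `s` in the score of the perturbed problem at
`gmmSolution G W v + s • gmmCorrection G W v y z` vanishes; this is what determines the
correction. -/
theorem gmmCorrection_spec (hA : IsUnit (Gᵀ * W⁻¹ * G).det) (v : m → K) :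
    (yᵀ - Gᵀ * W⁻¹ * z) *ᵥ (W⁻¹ *ᵥ (v + G *ᵥ gmmSolution G W v))
      + Gᵀ *ᵥ (W⁻¹ *ᵥ (y *ᵥ gmmSolution G W v + G *ᵥ gmmCorrection G W v y z)) = 0 := by
  have hA' : ∀ x, Gᵀ *ᵥ (W⁻¹ *ᵥ (G *ᵥ ((Gᵀ * W⁻¹ * G)⁻¹ *ᵥ x))) = x := fun x => by
    rw [mulVec_mulVec, mulVec_mulVec, mulVec_mulVec, mul_nonsing_inv _ hA, one_mulVec]
  simp only [gmmCorrection, mulVec_add, sub_mulVec, mulVec_sub, mulVec_neg, add_mulVec,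
    neg_mulVec, ← mulVec_mulVec, hA']
  abel

theorem gmmScore_add_smul_eq_sq_smul_gmmRemainder {s : K} (hW : IsUnit W.det)
    (hWs : IsUnit (W + s • z).det) (hA : IsUnit (Gᵀ * W⁻¹ * G).det) (v : m → K) :
    gmmScore (G + s • y) (W + s • z) v (gmmSolution G W v + s • gmmCorrection G W v y z) =
      s ^ 2 • gmmRemainder G W v y z s (W + s • z)⁻¹ := by
  set T := (W + s • z)⁻¹ with hT_def
  set h := gmmSolution G W v
  set t := gmmCorrection G W v y z
  set D := yᵀ - Gᵀ * W⁻¹ * z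
  have hT : ∀ x, T *ᵥ x = W⁻¹ *ᵥ x - s • (W⁻¹ *ᵥ (z *ᵥ (T *ᵥ x))) := fun x => by
    conv_lhs => rw [hT_def, Matrix.inv_add_smul_eq_inv_sub z s hW hWs]
    rw [sub_mulVec, smul_mulVec, ← mulVec_mulVec, ← mulVec_mulVec]
  have hGT : ∀ x, (G + s • y)ᵀ *ᵥ (T *ᵥ x) = Gᵀ *ᵥ (W⁻¹ *ᵥ x) + s • (D *ᵥ (T *ᵥ x)) := by
    intro x
    have hG : Gᵀ *ᵥ (T *ᵥ x) = Gᵀ *ᵥ (W⁻¹ *ᵥ x) - s • (Gᵀ *ᵥ (W⁻¹ *ᵥ (z *ᵥ (T *ᵥ x)))) := by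
      conv_lhs => rw [hT x]
      rw [mulVec_sub, mulVec_smul]
    rw [transpose_add, transpose_smul, add_mulVec, smul_mulVec, hG]
    simp only [D, sub_mulVec, ← mulVec_mulVec]
    module
  have h0 : Gᵀ *ᵥ (W⁻¹ *ᵥ (v + G *ᵥ h)) = 0 := gmmScore_gmmSolution hA v
  have h1 := gmmCorrection_spec (y := y) (z := z) hA v
  set w := y *ᵥ h + (G + s • y) *ᵥ t
  calc gmmScore (G + s • y) (W + s • z) v (h + s • t)
      = (G + s • y)ᵀ *ᵥ (T *ᵥ ((v + G *ᵥ h) + s • w)) := by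
        rw [gmmScore]
        congr 2
        simp only [w, add_mulVec, mulVec_add, smul_mulVec, mulVec_smul]
        module
    _ = s • (D *ᵥ (T *ᵥ (v + G *ᵥ h)) + Gᵀ *ᵥ (W⁻¹ *ᵥ w) + s • (D *ᵥ (T *ᵥ w))) := by
        rw [mulVec_add T, mulVec_smul T, mulVec_add, mulVec_smul, hGT, hGT, h0]
        module
    _ = s ^ 2 • gmmRemainder G W v y z s T := by
        rw [hT (v + G *ᵥ h), gmmRemainder]
        simp only [w, mulVec_sub, mulVec_add, add_mulVec, mulVec_smul, smul_mulVec] at h1 ⊢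
        linear_combination (norm := module) s • h1

end LinearGMM

theorem ContinuousAt.matrix_inv {X m : Type*} [TopologicalSpace X] [Fintype m] [DecidableEq m]
    {f : X → Matrix m m ℝ} {x : X} (hf : ContinuousAt f x) (hdet : (f x).det ≠ 0) :
    ContinuousAt (fun y => (f y)⁻¹) x := by
  refine (continuousAt_matrix_inv _ ?_).comp hf
  simpa [Ring.inverse_eq_inv'] using continuousAt_inv₀ hdet

theorem IsCompact.exists_eventually_forall_norm_le {X Y E : Type*} [TopologicalSpace X]
    [TopologicalSpace Y] [SeminormedAddCommGroup E] {S : Set Y} (hS : IsCompact S) {x₀ : X}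
    {f : X × Y → E} (hf : ∀ y ∈ S, ContinuousAt f (x₀, y)) :
    ∃ C, ∀ᶠ x in 𝓝 x₀, ∀ y ∈ S, ‖f (x, y)‖ ≤ C := by
  obtain ⟨C, hC⟩ := hS.exists_bound_of_continuousOn (f := fun y => f (x₀, y))
    fun y hy => ((hf y hy).comp (Continuous.prodMk_right x₀).continuousAt).continuousWithinAt
  refine ⟨C + 1, hS.eventually_forall_of_forall_eventually fun y hy => ?_⟩
  filter_upwards [(hf y hy).norm.eventually (gt_mem_nhds ((hC y hy).trans_lt (lt_add_one C)))]
    with p hp using hp.le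

theorem exists_norm_sub_gmmSolution_le {m n : Type*} [Fintype m] [DecidableEq m] [Fintype n]
    [DecidableEq n] {G : Matrix m n ℝ} {W : Matrix m m ℝ} (hW : W.det ≠ 0)
    (hA : (Gᵀ * W⁻¹ * G).det ≠ 0) {S : Set ((m → ℝ) × Matrix m n ℝ × Matrix m m ℝ)}
    (hS : IsCompact S) :
    ∃ C, ∀ᶠ s in 𝓝 (0 : ℝ), ∀ x ∈ S, ∀ θ,
      gmmScore (G + s • x.2.1) (W + s • x.2.2) x.1 θ = 0 →
        ‖θ - gmmSolution G W x.1 - s • gmmCorrection G W x.1 x.2.1 x.2.2‖ ≤ C * s ^ 2 := by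
  let Ws : ℝ × ((m → ℝ) × Matrix m n ℝ × Matrix m m ℝ) → Matrix m m ℝ :=
    fun p => W + p.1 • p.2.2.2
  let As : ℝ × ((m → ℝ) × Matrix m n ℝ × Matrix m m ℝ) → Matrix n n ℝ :=
    fun p => (G + p.1 • p.2.2.1)ᵀ * (Ws p)⁻¹ * (G + p.1 • p.2.2.1)
  have hWs : ∀ x, ContinuousAt (fun p => (Ws p)⁻¹) (0, x) := fun x =>
    ContinuousAt.matrix_inv (by fun_prop) (by simpa [Ws] using hW)
  have hAs : ∀ x, ContinuousAt (fun p => (As p)⁻¹) (0, x) := fun x =>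
    ContinuousAt.matrix_inv (by fun_prop) (by simpa [As, Ws] using hA)
  have hdet : ∀ᶠ s in 𝓝 (0 : ℝ), ∀ x ∈ S, (Ws (s, x)).det ≠ 0 ∧ (As (s, x)).det ≠ 0 :=
    hS.eventually_forall_of_forall_eventually fun x _ =>
      ((show ContinuousAt (fun p => (Ws p).det) (0, x) by fun_prop).eventually_ne
        (by simpa [Ws] using hW)).and
      ((show ContinuousAt (fun p => (As p).det) (0, x) by fun_prop).eventually_ne
        (by simpa [As, Ws] using hA))
  obtain ⟨C, hC⟩ := hS.exists_eventually_forall_norm_le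
    (f := fun p => (As p)⁻¹ *ᵥ gmmRemainder G W p.2.1 p.2.2.1 p.2.2.2 p.1 (Ws p)⁻¹)
    fun x _ => by simp only [gmmRemainder, gmmCorrection, gmmSolution]; fun_prop
  refine ⟨C, ?_⟩
  filter_upwards [hC, hdet] with s hCs hdets x hx θ hθ
  obtain ⟨hWsx, hAsx⟩ := hdets x hx
  have hroot := sub_gmmSolution_eq (G := G + s • x.2.1) (W := W + s • x.2.2) hAsx.isUnit x.1 θ
  rw [hθ, mulVec_zero, sub_eq_zero] at hroot
  have hexp := sub_gmmSolution_eq (G := G + s • x.2.1) (W := W + s • x.2.2) hAsx.isUnit x.1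
    (gmmSolution G W x.1 + s • gmmCorrection G W x.1 x.2.1 x.2.2)
  rw [gmmScore_add_smul_eq_sq_smul_gmmRemainder hW.isUnit hWsx.isUnit hA.isUnit,
    mulVec_smul] at hexp
  calc ‖θ - gmmSolution G W x.1 - s • gmmCorrection G W x.1 x.2.1 x.2.2‖
      = ‖s ^ 2 • (As (s, x))⁻¹ *ᵥ gmmRemainder G W x.1 x.2.1 x.2.2 s (Ws (s, x))⁻¹‖ := by
        rw [← hexp, hroot, ← norm_neg]
        congr 1
        abel
    _ ≤ C * s ^ 2 := by
        rw [norm_smul, Real.norm_of_nonneg (sq_nonneg s), mul_comm]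
        exact mul_le_mul_of_nonneg_right (hCs x hx) (sq_nonneg s)

theorem smul_sum_add_mulVec_sub {ι R m n : Type*} [CommRing R] [Fintype n] (c : R)
    (s : Finset ι) (a : ι → m → R) (B : ι → Matrix m n R) (θ θ₀ : n → R) :
    c • ∑ i ∈ s, (a i + B i *ᵥ θ) =
      c • ∑ i ∈ s, (a i + B i *ᵥ θ₀) + (c • ∑ i ∈ s, B i) *ᵥ (θ - θ₀) := by
  rw [smul_mulVec, sum_mulVec, ← smul_add, ← Finset.sum_add_distrib]
  congr 1
  refine Finset.sum_congr rfl fun i _ => ?_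
  rw [mulVec_sub]
  abel

section BigOp

variable {Ω : Type*} [MeasurableSpace Ω] {P : Measure Ω}

theorem MeasureTheory.measure_union_lt_ofReal {s t : Set Ω} {ε : ℝ} (hε : 0 ≤ ε)
    (hs : P s < ENNReal.ofReal (ε / 2)) (ht : P t < ENNReal.ofReal (ε / 2)) :
    P (s ∪ t) < ENNReal.ofReal ε :=
  calc P (s ∪ t) ≤ P s + P t := measure_union_le s t
    _ < ENNReal.ofReal (ε / 2) + ENNReal.ofReal (ε / 2) := ENNReal.add_lt_add hs ht
    _ = ENNReal.ofReal ε := by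
      rw [← ENNReal.ofReal_add (by positivity) (by positivity), add_halves]

theorem IsBigOp.prodMk {E F : Type*} [Norm E] [Norm F] {X : ℕ → Ω → E} {Y : ℕ → Ω → F}
    {a : ℕ → ℝ} (hX : IsBigOp P X a) (hY : IsBigOp P Y a) :
    IsBigOp P (fun n ω => (X n ω, Y n ω)) a := by
  intro ε hε
  obtain ⟨M₁, hM₁, h₁⟩ := hX (ε / 2) (half_pos hε)
  obtain ⟨M₂, -, h₂⟩ := hY (ε / 2) (half_pos hε)
  refine ⟨max M₁ M₂, lt_max_of_lt_left hM₁, ?_⟩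
  filter_upwards [h₁, h₂] with n hn₁ hn₂
  refine (measure_mono fun ω hω => ?_).trans_lt (measure_union_lt_ofReal hε.le hn₁ hn₂)
  simp only [Set.mem_ofPred_eq, Set.mem_union, Prod.norm_def] at hω ⊢
  rcases max_choice ‖X n ω‖ ‖Y n ω‖ with h | h <;> rw [h] at hω
  · exact Or.inl ((le_max_left _ _).trans_lt hω)
  · exact Or.inr ((le_max_right _ _).trans_lt hω)

theorem IsBigOp.of_bound_of_isBigOp_one {E F : Type*} [Norm E] [Norm F] {U : ℕ → Ω → E}
    (hU : IsBigOp P U fun _ => 1) {bad : ℕ → Set Ω}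
    (hbad : Tendsto (fun n => P (bad n)) atTop (𝓝 0)) {Z : ℕ → Ω → F} {a : ℕ → ℝ}
    (hZ : ∀ M, ∃ C, ∀ᶠ n in atTop, ∀ ω, ‖U n ω‖ ≤ M → ω ∉ bad n → ‖Z n ω‖ / a n ≤ C) :
    IsBigOp P Z a := by
  intro ε hε
  obtain ⟨M, -, hM⟩ := hU (ε / 2) (half_pos hε)
  obtain ⟨C, hC⟩ := hZ M
  refine ⟨max C 0 + 1, by positivity, ?_⟩
  filter_upwards [hM, hC, hbad.eventually_lt_const (ENNReal.ofReal_pos.2 (half_pos hε))]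
    with n hMn hCn hbadn
  refine (measure_mono fun ω hω => ?_).trans_lt (measure_union_lt_ofReal hε.le hMn hbadn)
  by_contra hgood
  simp only [Set.mem_ofPred_eq, Set.mem_union, not_or, not_lt, div_one] at hω hgood
  linarith [hCn ω hgood.1 hgood.2, le_max_left C 0]

end BigOp

theorem onestep_gmm_stochastic_expansion_local_misspecification_general
    {Ωs : Type*} [MeasurableSpace Ωs] (P : Measure Ωs)
    {dx q k : ℕ}
    -- the triangular array of observations
    (X : ℕ → ℕ → Ωs → (Fin dx → ℝ))
    -- the linear moment function, its Jacobian, and the weight function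
    (a : (Fin dx → ℝ) → (Fin q → ℝ))
    (B : (Fin dx → ℝ) → Matrix (Fin q) (Fin k) ℝ)
    (g : (Fin dx → ℝ) → (Fin k → ℝ) → (Fin q → ℝ))
    (hg : ∀ x θ, g x θ = a x + B x *ᵥ θ)
    -- local misspecification: `E[g(X_{in},θ₀)] = δ/√n`, with fixed nonzero `δ`
    (θ0 : Fin k → ℝ) (δ : Fin q → ℝ)
    -- the population Jacobian and weight matrix, not depending on `n`
    (Gm : Matrix (Fin q) (Fin k) ℝ)
    (Wm : Matrix (Fin q) (Fin q) ℝ)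
    -- `G` full column rank; `W` positive definite
    (hGrank : Gm.rank = k) (hWpd : Wm.PosDef)
    -- sample moments
    (gn : ℕ → (Fin k → ℝ) → Ωs → (Fin q → ℝ))
    (hgn : ∀ n θ ω, gn n θ ω = (n : ℝ)⁻¹ • ∑ i ∈ Finset.range n, g (X n i ω) θ)
    (Gn : ℕ → Ωs → Matrix (Fin q) (Fin k) ℝ)
    (hGn : ∀ n ω, Gn n ω = (n : ℝ)⁻¹ • ∑ i ∈ Finset.range n, B (X n i ω))
    (Wn : ℕ → Ωs → Matrix (Fin q) (Fin q) ℝ)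
    -- the centered processes `g̃`, `G̃`, `W̃`, each `O_p(1)`
    (gt : ℕ → Ωs → (Fin q → ℝ))
    (hgt : ∀ n ω, gt n ω = Real.sqrt n • (gn n θ0 ω - (Real.sqrt n)⁻¹ • δ))
    (Gt : ℕ → Ωs → Matrix (Fin q) (Fin k) ℝ)
    (hGt : ∀ n ω, Gt n ω = Real.sqrt n • (Gn n ω - Gm))
    (Wt : ℕ → Ωs → Matrix (Fin q) (Fin q) ℝ)
    (hWt : ∀ n ω, Wt n ω = Real.sqrt n • (Wn n ω - Wm))
    (hgtOp : IsBigOp P gt fun _ => 1)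
    (hGtOp : IsBigOp P Gt fun _ => 1)
    (hWtOp : IsBigOp P Wt fun _ => 1)
    -- the one-step GMM estimator: a measurable minimizer of the one-step criterion
    (θh1 : ℕ → Ωs → (Fin k → ℝ))
    -- the first-order condition holds with probability approaching one
    (hFOC : Tendsto
      (fun n => P {ω | (Gn n ω)ᵀ *ᵥ ((Wn n ω)⁻¹ *ᵥ gn n (θh1 n ω) ω) ≠ 0})
      atTop (nhds 0))
    -- the terms of the expansion
    (ηW : Fin k → ℝ)
    (hηW : ηW = -((Gmᵀ * Wm⁻¹ * Gm)⁻¹ *ᵥ (Gmᵀ *ᵥ (Wm⁻¹ *ᵥ δ))))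
    (ψW0 : ℕ → Ωs → (Fin k → ℝ))
    (hψW0 : ∀ n ω, ψW0 n ω = -((Gmᵀ * Wm⁻¹ * Gm)⁻¹ *ᵥ (Gmᵀ *ᵥ (Wm⁻¹ *ᵥ gt n ω))))
    (ψW1 : ℕ → Ωs → (Fin k → ℝ))
    (hψW1 : ∀ n ω, ψW1 n ω = -((Gmᵀ * Wm⁻¹ * Gm)⁻¹ *ᵥ
      ((Gt n ω)ᵀ *ᵥ (Wm⁻¹ *ᵥ δ) - Gmᵀ *ᵥ (Wm⁻¹ *ᵥ (Wt n ω *ᵥ (Wm⁻¹ *ᵥ δ))))))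
    (qW : ℕ → Ωs → (Fin k → ℝ))
    (hqW : ∀ n ω, qW n ω = -((Gmᵀ * Wm⁻¹ * Gm)⁻¹ *ᵥ
      ((Gt n ω)ᵀ *ᵥ (Wm⁻¹ *ᵥ gt n ω)
        - Gmᵀ *ᵥ (Wm⁻¹ *ᵥ (Wt n ω *ᵥ (Wm⁻¹ *ᵥ gt n ω))))))
    (BW : ℕ → Ωs → Matrix (Fin k) (Fin k) ℝ)
    (hBW : ∀ n ω, BW n ω = -((Gmᵀ * Wm⁻¹ * Gm)⁻¹ *
      ((Gt n ω)ᵀ * Wm⁻¹ * Gm - Gmᵀ * Wm⁻¹ * Wt n ω * Wm⁻¹ * Gm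
        + Gmᵀ * Wm⁻¹ * Gt n ω))) :
    -- conclusion: the remainder of the stochastic expansion is `O_p(n⁻¹)`
    IsBigOp P
      (fun n ω =>
        Real.sqrt n • (θh1 n ω - θ0) - ηW - ψW0 n ω
          - (Real.sqrt n)⁻¹ • (ψW1 n ω + qW n ω + BW n ω *ᵥ (ηW + ψW0 n ω)))
      (fun n => (n : ℝ)⁻¹) := by
  have hA := (hWpd.transpose_mul_inv_mul (G := Gm) (by simpa using hGrank)).det_pos.ne'
  have hs : Tendsto (fun n : ℕ => (Real.sqrt n)⁻¹) atTop (𝓝 0) :=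
    tendsto_inv_atTop_zero.comp (Real.tendsto_sqrt_atTop.comp tendsto_natCast_atTop_atTop)
  refine IsBigOp.of_bound_of_isBigOp_one (hgtOp.prodMk (hGtOp.prodMk hWtOp)) hFOC fun M => ?_
  obtain ⟨C, hC⟩ := exists_norm_sub_gmmSolution_le hWpd.det_pos.ne' hA
    (isCompact_closedBall (δ, 0, 0) M)
  refine ⟨C, ?_⟩
  filter_upwards [hs.eventually hC, eventually_gt_atTop 0] with n hCn hn ω hM hfoc
  have hmem : (δ + gt n ω, Gt n ω, Wt n ω) ∈ Metric.closedBall (δ, 0, 0) M :=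
    mem_closedBall_iff_norm.2 (by simpa using hM)
  have hlin : gn n (θh1 n ω) ω = gn n θ0 ω + Gn n ω *ᵥ (θh1 n ω - θ0) := by
    simp only [hgn, hGn, hg]
    exact smul_sum_add_mulVec_sub _ _ _ _ _ _
  have hscore := gmmScore_centered_eq_zero (by positivity) (hGt n ω) (hWt n ω) (hgt n ω)
    (by rw [gmmScore, ← hlin]; exact not_ne_iff.mp hfoc)
  have hsol : ηW + ψW0 n ω = gmmSolution Gm Wm (δ + gt n ω) := by
    rw [gmmSolution_add, hηW, hψW0]
    rfl
  have hcor : ψW1 n ω + qW n ω + BW n ω *ᵥ (ηW + ψW0 n ω) =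
      gmmCorrection Gm Wm (δ + gt n ω) (Gt n ω) (Wt n ω) := by
    rw [hsol, hψW1, hqW, hBW, gmmCorrection]
    simp only [mulVec_add, mulVec_sub]
    abel
  have hbound := hCn _ hmem _ hscore
  rw [← hcor, ← hsol, sub_add_eq_sub_sub, inv_pow, Real.sq_sqrt (Nat.cast_nonneg n)] at hbound
  exact (div_le_iff₀ (by positivity)).2 hbound

/-- **Stochastic expansion of the one-step GMM estimator under local misspecification
(Theorem 2).** For a triangular array `{X_{in}}`, i.i.d. within each row, with a linear
moment function `g(x,θ) = a(x) + B(x)θ` satisfying the locally misspecified moment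
condition `E[g(X_{in},θ₀)] = δ/√n`, if `g̃ = O_p(1)`, `G̃ = O_p(1)`, `W̃ = O_p(1)`, the
one-step first-order condition holds with probability approaching one, `G` has full column
rank, `W` is positive definite, and second moments are finite, then w.p.a.1
`√n(θ̂₁ − θ₀) = η_W + ψ̃_{W,0} + n^{−1/2}(ψ̃_{W,1} + q̃_W + B̃_W(η_W + ψ̃_{W,0})) + O_p(n⁻¹)`. -/
theorem onestep_gmm_stochastic_expansion_local_misspecification
    {Ωs : Type*} [MeasurableSpace Ωs] (P : Measure Ωs) [IsProbabilityMeasure P]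
    {dx q k : ℕ} (hqk : k < q)
    -- the triangular array of observations
    (X : ℕ → ℕ → Ωs → (Fin dx → ℝ)) (hXmeas : ∀ n i, Measurable (X n i))
    -- the linear moment function, its Jacobian, and the weight function
    (a : (Fin dx → ℝ) → (Fin q → ℝ)) (ha : Measurable a)
    (B : (Fin dx → ℝ) → Matrix (Fin q) (Fin k) ℝ)
    (hB : ∀ r c, Measurable fun x => B x r c)
    (Wf : (Fin dx → ℝ) → Matrix (Fin q) (Fin q) ℝ)
    (hWf : ∀ r c, Measurable fun x => Wf x r c)
    (g : (Fin dx → ℝ) → (Fin k → ℝ) → (Fin q → ℝ))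
    (hg : ∀ x θ, g x θ = a x + B x *ᵥ θ)
    -- i.i.d. within each row
    (hindep : ∀ n : ℕ, iIndepFun
      (fun i : Fin n => X n i.1) P)
    (hident : ∀ n : ℕ, ∀ i j : ℕ, i < n → j < n → IdentDistrib (X n i) (X n j) P P)
    -- local misspecification: `E[g(X_{in},θ₀)] = δ/√n`, with fixed nonzero `δ`
    (θ0 : Fin k → ℝ) (δ : Fin q → ℝ) (hδ : δ ≠ 0)
    (hlocal : ∀ n : ℕ, 0 < n → ∀ i : ℕ, i < n → ∀ r : Fin q,
      ∫ ω, g (X n i ω) θ0 r ∂P = δ r / Real.sqrt n)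
    -- the population Jacobian and weight matrix, not depending on `n`
    (Gm : Matrix (Fin q) (Fin k) ℝ)
    (hGm : ∀ n : ℕ, 0 < n → ∀ i : ℕ, i < n → ∀ r c,
      Gm r c = ∫ ω, B (X n i ω) r c ∂P)
    (Wm : Matrix (Fin q) (Fin q) ℝ)
    (hWm : ∀ n : ℕ, 0 < n → ∀ i : ℕ, i < n → ∀ r c,
      Wm r c = ∫ ω, Wf (X n i ω) r c ∂P)
    -- `G` full column rank; `W` positive definite
    (hGrank : Gm.rank = k) (hWpd : Wm.PosDef)
    -- finite second moments of `g(X_{in},θ₀)`, `G(X_{in})` and `W(X_{in})`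
    (hmom_g : ∀ n : ℕ, 0 < n → ∀ i : ℕ, i < n →
      Integrable (fun ω => ‖g (X n i ω) θ0‖ ^ 2) P)
    (hmom_G : ∀ n : ℕ, 0 < n → ∀ i : ℕ, i < n →
      Integrable (fun ω => ‖B (X n i ω)‖ ^ 2) P)
    (hmom_W : ∀ n : ℕ, 0 < n → ∀ i : ℕ, i < n →
      Integrable (fun ω => ‖Wf (X n i ω)‖ ^ 2) P)
    -- sample moments
    (gn : ℕ → (Fin k → ℝ) → Ωs → (Fin q → ℝ))
    (hgn : ∀ n θ ω, gn n θ ω = (n : ℝ)⁻¹ • ∑ i ∈ Finset.range n, g (X n i ω) θ)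
    (Gn : ℕ → Ωs → Matrix (Fin q) (Fin k) ℝ)
    (hGn : ∀ n ω, Gn n ω = (n : ℝ)⁻¹ • ∑ i ∈ Finset.range n, B (X n i ω))
    (Wn : ℕ → Ωs → Matrix (Fin q) (Fin q) ℝ)
    (hWn : ∀ n ω, Wn n ω = (n : ℝ)⁻¹ • ∑ i ∈ Finset.range n, Wf (X n i ω))
    -- the centered processes `g̃`, `G̃`, `W̃`, each `O_p(1)`
    (gt : ℕ → Ωs → (Fin q → ℝ))
    (hgt : ∀ n ω, gt n ω = Real.sqrt n • (gn n θ0 ω - (Real.sqrt n)⁻¹ • δ))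
    (Gt : ℕ → Ωs → Matrix (Fin q) (Fin k) ℝ)
    (hGt : ∀ n ω, Gt n ω = Real.sqrt n • (Gn n ω - Gm))
    (Wt : ℕ → Ωs → Matrix (Fin q) (Fin q) ℝ)
    (hWt : ∀ n ω, Wt n ω = Real.sqrt n • (Wn n ω - Wm))
    (hgtOp : IsBigOp P gt fun _ => 1)
    (hGtOp : IsBigOp P Gt fun _ => 1)
    (hWtOp : IsBigOp P Wt fun _ => 1)
    -- the one-step GMM estimator: a measurable minimizer of the one-step criterion
    (θh1 : ℕ → Ωs → (Fin k → ℝ)) (hθh1meas : ∀ n, Measurable (θh1 n))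
    (hθh1min : ∀ n ω θ,
      gn n (θh1 n ω) ω ⬝ᵥ ((Wn n ω)⁻¹ *ᵥ gn n (θh1 n ω) ω)
        ≤ gn n θ ω ⬝ᵥ ((Wn n ω)⁻¹ *ᵥ gn n θ ω))
    -- the first-order condition holds with probability approaching one
    (hFOC : Tendsto
      (fun n => P {ω | (Gn n ω)ᵀ *ᵥ ((Wn n ω)⁻¹ *ᵥ gn n (θh1 n ω) ω) ≠ 0})
      atTop (nhds 0))
    -- the terms of the expansion
    (ηW : Fin k → ℝ)
    (hηW : ηW = -((Gmᵀ * Wm⁻¹ * Gm)⁻¹ *ᵥ (Gmᵀ *ᵥ (Wm⁻¹ *ᵥ δ))))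
    (ψW0 : ℕ → Ωs → (Fin k → ℝ))
    (hψW0 : ∀ n ω, ψW0 n ω = -((Gmᵀ * Wm⁻¹ * Gm)⁻¹ *ᵥ (Gmᵀ *ᵥ (Wm⁻¹ *ᵥ gt n ω))))
    (ψW1 : ℕ → Ωs → (Fin k → ℝ))
    (hψW1 : ∀ n ω, ψW1 n ω = -((Gmᵀ * Wm⁻¹ * Gm)⁻¹ *ᵥ
      ((Gt n ω)ᵀ *ᵥ (Wm⁻¹ *ᵥ δ) - Gmᵀ *ᵥ (Wm⁻¹ *ᵥ (Wt n ω *ᵥ (Wm⁻¹ *ᵥ δ))))))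
    (qW : ℕ → Ωs → (Fin k → ℝ))
    (hqW : ∀ n ω, qW n ω = -((Gmᵀ * Wm⁻¹ * Gm)⁻¹ *ᵥ
      ((Gt n ω)ᵀ *ᵥ (Wm⁻¹ *ᵥ gt n ω)
        - Gmᵀ *ᵥ (Wm⁻¹ *ᵥ (Wt n ω *ᵥ (Wm⁻¹ *ᵥ gt n ω))))))
    (BW : ℕ → Ωs → Matrix (Fin k) (Fin k) ℝ)
    (hBW : ∀ n ω, BW n ω = -((Gmᵀ * Wm⁻¹ * Gm)⁻¹ *
      ((Gt n ω)ᵀ * Wm⁻¹ * Gm - Gmᵀ * Wm⁻¹ * Wt n ω * Wm⁻¹ * Gm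
        + Gmᵀ * Wm⁻¹ * Gt n ω))) :
    -- conclusion: the remainder of the stochastic expansion is `O_p(n⁻¹)`
    IsBigOp P
      (fun n ω =>
        Real.sqrt n • (θh1 n ω - θ0) - ηW - ψW0 n ω
          - (Real.sqrt n)⁻¹ • (ψW1 n ω + qW n ω + BW n ω *ᵥ (ηW + ψW0 n ω)))
      (fun n => (n : ℝ)⁻¹) :=
  onestep_gmm_stochastic_expansion_local_misspecification_general P X a B g hg θ0 δ Gm Wm hGrank
    hWpd gn hgn Gn hGn Wn gt hgt Gt hGt Wt hWt hgtOp hGtOp hWtOp θh1 hFOC ηW hηW ψW0 hψW0 ψW1 hψW1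
    qW hqW BW hBW
end
end

section
/- Geometric expansion of a random matrix inverse (Lemma 1): let (X_n) and (Y_n) be sequences of random q×q real matrices such that X_n⁻¹ and (X_n + n^{−1/2}Y_n)⁻¹ exist almost surely, and X_n⁻¹ = O_p(1) and Y_n = O_p(1). Then for every nonnegative integer m, (X_n + n^{−1/2}Y_n)⁻¹ = ∑_{j=0}^{m} (−n^{−1/2} X_n⁻¹Y_n)^j X_n⁻¹ + O_p(n^{−(m+1)/2}). -/
/-!
With `b = -t X⁻¹Y`, invertibility of `X` and `X + tY` gives the resolvent identity
`(X + tY)⁻¹ = X⁻¹ + b (X + tY)⁻¹`; iterating it leaves the exact remainder `b^(m+1) (X + tY)⁻¹`.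
On the event `‖X⁻¹‖, ‖Y‖ ≤ M`, whose probability is close to one uniformly in `n`, we have
`q‖b‖ ≤ t (qM)²` (the entrywise sup norm is submultiplicative up to the factor `q`), so once
`t = n^{-1/2}` is small the identity also gives `‖(X + tY)⁻¹‖ ≤ 2M`, and the remainder is at most
`(t (qM)²)^(m+1) · 2M`, a constant times `n^{-(m+1)/2}`.
-/

open Matrix Filter MeasureTheory

attribute [local instance] Matrix.normedAddCommGroup

noncomputable section

attribute [local instance] Matrix.normSMulClass

theorem eq_sum_pow_mul_add_pow_mul {R : Type*} [Ring R] {u b w : R} (h : w = u + b * w)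
    (m : ℕ) : w = ∑ j ∈ Finset.range m, b ^ j * u + b ^ m * w := by
  induction m with
  | zero => simp
  | succ m ih =>
    calc w = ∑ j ∈ Finset.range m, b ^ j * u + b ^ m * (u + b * w) := by rw [← h, ← ih]
      _ = _ := by rw [Finset.sum_range_succ, pow_succ, mul_add, mul_assoc, add_assoc]

theorem eq_add_neg_mul_mul_of_mul_eq_one {R : Type*} [Ring R] {x e u w : R}
    (hu : u * x = 1) (hw : (x + e) * w = 1) : w = u + -(u * e) * w := by
  calc w = u * x * w := by rw [hu, one_mul]
    _ = u * ((x + e) * w) + -(u * e) * w := by noncomm_ring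
    _ = u + -(u * e) * w := by rw [hw, mul_one]

namespace Matrix

variable {l m n α : Type*} [Fintype l] [Fintype m] [Fintype n]

theorem norm_mul_le_card_mul [NonUnitalNormedRing α] (A : Matrix l m α)
    (B : Matrix m n α) : ‖A * B‖ ≤ Fintype.card m * ‖A‖ * ‖B‖ := by
  refine (Matrix.norm_le_iff (by positivity)).2 fun i j => ?_
  calc ‖∑ k, A i k * B k j‖ ≤ ∑ k, ‖A i k‖ * ‖B k j‖ :=
        (norm_sum_le _ _).trans (Finset.sum_le_sum fun k _ => norm_mul_le _ _)
    _ ≤ ∑ _k : m, ‖A‖ * ‖B‖ := by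
        gcongr with k
        exacts [norm_entry_le_entrywise_sup_norm A, norm_entry_le_entrywise_sup_norm B]
    _ = Fintype.card m * ‖A‖ * ‖B‖ := by
        rw [Finset.sum_const, Finset.card_univ, nsmul_eq_mul, mul_assoc]

theorem norm_pow_mul_le [NormedRing α] [DecidableEq n] (b : Matrix n n α)
    (w : Matrix n m α) (k : ℕ) : ‖b ^ k * w‖ ≤ (Fintype.card n * ‖b‖) ^ k * ‖w‖ := by
  induction k with
  | zero => simp
  | succ k ih =>
    calc ‖b ^ (k + 1) * w‖ = ‖b * (b ^ k * w)‖ := by rw [pow_succ', Matrix.mul_assoc]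
      _ ≤ Fintype.card n * ‖b‖ * ‖b ^ k * w‖ := norm_mul_le_card_mul _ _
      _ ≤ Fintype.card n * ‖b‖ * ((Fintype.card n * ‖b‖) ^ k * ‖w‖) := by gcongr
      _ = (Fintype.card n * ‖b‖) ^ (k + 1) * ‖w‖ := by ring

theorem norm_le_two_mul_of_eq_add_mul [NormedRing α] {u w : Matrix n m α}
    {b : Matrix n n α} (h : w = u + b * w) (hb : Fintype.card n * ‖b‖ ≤ 1 / 2) :
    ‖w‖ ≤ 2 * ‖u‖ := by
  have : ‖w‖ ≤ ‖u‖ + Fintype.card n * ‖b‖ * ‖w‖ :=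
    calc ‖w‖ = ‖u + b * w‖ := by rw [← h]
      _ ≤ _ := (norm_add_le _ _).trans (by gcongr; exact norm_mul_le_card_mul _ _)
  nlinarith [norm_nonneg w]

theorem norm_inv_add_smul_sub_sum_le {𝕜 : Type*} [NormedField 𝕜] [DecidableEq n]
    {X Y : Matrix n n 𝕜} {t : 𝕜} {M : ℝ} (hX : IsUnit X.det) (hXtY : IsUnit (X + t • Y).det)
    (hXM : ‖X⁻¹‖ ≤ M) (hYM : ‖Y‖ ≤ M) (ht : ‖t‖ * (Fintype.card n * M) ^ 2 ≤ 1 / 2)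
    (m : ℕ) :
    ‖(X + t • Y)⁻¹ - ∑ j ∈ Finset.range (m + 1), ((-t) • (X⁻¹ * Y)) ^ j * X⁻¹‖
      ≤ (‖t‖ * (Fintype.card n * M) ^ 2) ^ (m + 1) * (2 * M) := by
  set b := (-t) • (X⁻¹ * Y)
  have hres : (X + t • Y)⁻¹ = X⁻¹ + b * (X + t • Y)⁻¹ := by
    rw [show b = -(X⁻¹ * (t • Y)) by rw [Matrix.mul_smul, ← neg_smul]]
    exact eq_add_neg_mul_mul_of_mul_eq_one (nonsing_inv_mul X hX) (mul_nonsing_inv _ hXtY)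
  have hb : Fintype.card n * ‖b‖ ≤ ‖t‖ * (Fintype.card n * M) ^ 2 := by
    have hmul := norm_mul_le_card_mul X⁻¹ Y
    calc Fintype.card n * ‖b‖ ≤ Fintype.card n * (‖t‖ * (Fintype.card n * ‖X⁻¹‖ * ‖Y‖)) := by
          rw [norm_smul, norm_neg]; gcongr
      _ ≤ Fintype.card n * (‖t‖ * (Fintype.card n * M * M)) := by
          have hM : 0 ≤ M := (norm_nonneg _).trans hYM
          gcongr
      _ = ‖t‖ * (Fintype.card n * M) ^ 2 := by ring
  rw [sub_eq_of_eq_add' (eq_sum_pow_mul_add_pow_mul hres (m + 1))]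
  calc ‖b ^ (m + 1) * (X + t • Y)⁻¹‖
      ≤ (Fintype.card n * ‖b‖) ^ (m + 1) * ‖(X + t • Y)⁻¹‖ := norm_pow_mul_le _ _ _
    _ ≤ (‖t‖ * (Fintype.card n * M) ^ 2) ^ (m + 1) * (2 * M) := by
        gcongr
        exact (norm_le_two_mul_of_eq_add_mul hres (hb.trans ht)).trans (by gcongr)

end Matrix

namespace IsBigOp

variable {Ω E F : Type*} [MeasurableSpace Ω] {P : Measure Ω} [Norm E] [Norm F]

theorem prodMk_s6 {U : ℕ → Ω → E} {V : ℕ → Ω → F} (hU : IsBigOp P U fun _ => 1)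
    (hV : IsBigOp P V fun _ => 1) : IsBigOp P (fun n ω => (U n ω, V n ω)) fun _ => 1 := by
  intro ε hε
  obtain ⟨M₁, hM₁, hU⟩ := hU (ε / 2) (by positivity)
  obtain ⟨M₂, hM₂, hV⟩ := hV (ε / 2) (by positivity)
  refine ⟨max M₁ M₂, lt_max_of_lt_left hM₁, ?_⟩
  filter_upwards [hU, hV] with n hUn hVn
  have hsub : {ω | max M₁ M₂ < ‖(U n ω, V n ω)‖ / 1}
      ⊆ {ω | M₁ < ‖U n ω‖ / 1} ∪ {ω | M₂ < ‖V n ω‖ / 1} := by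
    intro ω (hω : max M₁ M₂ < max ‖U n ω‖ ‖V n ω‖ / 1)
    show M₁ < ‖U n ω‖ / 1 ∨ M₂ < ‖V n ω‖ / 1
    simp only [div_one] at hω ⊢
    rcases lt_max_iff.1 hω with h | h
    exacts [Or.inl ((le_max_left _ _).trans_lt h), Or.inr ((le_max_right _ _).trans_lt h)]
  calc P _ ≤ P {ω | M₁ < ‖U n ω‖ / 1} + P {ω | M₂ < ‖V n ω‖ / 1} :=
        (measure_mono hsub).trans (measure_union_le _ _)
    _ < ENNReal.ofReal (ε / 2) + ENNReal.ofReal (ε / 2) := ENNReal.add_lt_add hUn hVn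
    _ = ENNReal.ofReal ε := by
        rw [← ENNReal.ofReal_add (by positivity) (by positivity), add_halves]

theorem of_ae_bound {S : ℕ → Ω → E} {Z : ℕ → Ω → F} {a : ℕ → ℝ}
    (hS : IsBigOp P S fun _ => 1) (ha : ∀ᶠ n in atTop, 0 < a n)
    (hZ : ∀ M > 0, ∃ C, ∀ᶠ n in atTop, ∀ᵐ ω ∂P, ‖S n ω‖ ≤ M → ‖Z n ω‖ ≤ C * a n) :
    IsBigOp P Z a := by
  intro ε hε
  obtain ⟨M, hM, hSM⟩ := hS ε hε
  obtain ⟨C, hC⟩ := hZ M hM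
  refine ⟨max C 1, by positivity, ?_⟩
  filter_upwards [hSM, hC, ha] with n hSn hCn han
  refine lt_of_le_of_lt (measure_mono_ae ?_) hSn
  filter_upwards [hCn] with ω hω (hZω : max C 1 < ‖Z n ω‖ / a n)
  show M < ‖S n ω‖ / 1
  rw [div_one]
  by_contra! hSω
  have : ‖Z n ω‖ / a n ≤ C := (div_le_iff₀ han).2 (hω hSω)
  linarith [le_max_left C 1]

end IsBigOp

theorem geometric_expansion_random_matrix_inverse_general
    {Ωs : Type*} [MeasurableSpace Ωs] (P : Measure Ωs)
    {q : ℕ} (X Y : ℕ → Ωs → Matrix (Fin q) (Fin q) ℝ)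
    (hXinv : ∀ n, ∀ᵐ ω ∂P, IsUnit (X n ω).det)
    (hXYinv : ∀ n, ∀ᵐ ω ∂P,
      IsUnit (X n ω + ((n : ℝ) ^ (-(1 : ℝ) / 2)) • Y n ω).det)
    (hXinvOp : IsBigOp P (fun n ω => (X n ω)⁻¹) (fun _ => 1))
    (hYOp : IsBigOp P Y (fun _ => 1)) :
    ∀ m : ℕ,
      IsBigOp P
        (fun n ω =>
          (X n ω + ((n : ℝ) ^ (-(1 : ℝ) / 2)) • Y n ω)⁻¹
            - ∑ j ∈ Finset.range (m + 1),
                (-((n : ℝ) ^ (-(1 : ℝ) / 2)) • ((X n ω)⁻¹ * Y n ω)) ^ j * (X n ω)⁻¹)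
        (fun n => (n : ℝ) ^ (-((m : ℝ) + 1) / 2)) := by
  intro m
  have ht : Tendsto (fun n : ℕ => (n : ℝ) ^ (-(1 : ℝ) / 2)) atTop (nhds 0) := by
    simpa [Function.comp_def, neg_div] using
      (tendsto_rpow_neg_atTop (by norm_num : (0 : ℝ) < 1 / 2)).comp tendsto_natCast_atTop_atTop
  have hpow (n : ℕ) : ((n : ℝ) ^ (-(1 : ℝ) / 2)) ^ (m + 1) = (n : ℝ) ^ (-((m : ℝ) + 1) / 2) := by
    rw [← Real.rpow_natCast, ← Real.rpow_mul n.cast_nonneg]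
    push_cast
    ring_nf
  refine (hXinvOp.prodMk_s6 hYOp).of_ae_bound ?_ fun M _ => ⟨((q * M) ^ 2) ^ (m + 1) * (2 * M), ?_⟩
  · filter_upwards [eventually_ge_atTop 1] with n hn
    exact Real.rpow_pos_of_pos (Nat.cast_pos.2 hn) _
  have hsmall : ∀ᶠ n : ℕ in atTop, (n : ℝ) ^ (-(1 : ℝ) / 2) * (q * M) ^ 2 ≤ 1 / 2 :=
    (ht.mul_const _).eventually (ge_mem_nhds (by rw [zero_mul]; norm_num))
  filter_upwards [hsmall] with n hn
  filter_upwards [hXinv n, hXYinv n] with ω hX hXY hS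
  obtain ⟨hXM, hYM⟩ := max_le_iff.1 hS
  have ht0 : 0 ≤ (n : ℝ) ^ (-(1 : ℝ) / 2) := Real.rpow_nonneg n.cast_nonneg _
  calc _ ≤ _ := Matrix.norm_inv_add_smul_sub_sum_le hX hXY hXM hYM
        (by rwa [Real.norm_of_nonneg ht0, Fintype.card_fin]) m
    _ = _ := by rw [Real.norm_of_nonneg ht0, Fintype.card_fin, mul_pow, hpow]; ring

/-- **Geometric expansion of a random matrix inverse (Lemma 1).** If `X_n⁻¹` and
`(X_n + n^{−1/2} Y_n)⁻¹` exist almost surely, `X_n⁻¹ = O_p(1)` and `Y_n = O_p(1)`, then for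
every nonnegative integer `m`,
`(X_n + n^{−1/2}Y_n)⁻¹ = ∑_{j=0}^{m} (−n^{−1/2} X_n⁻¹Y_n)^j X_n⁻¹ + O_p(n^{−(m+1)/2})`. -/
theorem geometric_expansion_random_matrix_inverse
    {Ωs : Type*} [MeasurableSpace Ωs] (P : Measure Ωs) [IsProbabilityMeasure P]
    {q : ℕ} (X Y : ℕ → Ωs → Matrix (Fin q) (Fin q) ℝ)
    (hXmeas : ∀ n (i j : Fin q), Measurable fun ω => X n ω i j)
    (hYmeas : ∀ n (i j : Fin q), Measurable fun ω => Y n ω i j)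
    (hXinv : ∀ n, ∀ᵐ ω ∂P, IsUnit (X n ω).det)
    (hXYinv : ∀ n, ∀ᵐ ω ∂P,
      IsUnit (X n ω + ((n : ℝ) ^ (-(1 : ℝ) / 2)) • Y n ω).det)
    (hXinvOp : IsBigOp P (fun n ω => (X n ω)⁻¹) (fun _ => 1))
    (hYOp : IsBigOp P Y (fun _ => 1)) :
    ∀ m : ℕ,
      IsBigOp P
        (fun n ω =>
          (X n ω + ((n : ℝ) ^ (-(1 : ℝ) / 2)) • Y n ω)⁻¹
            - ∑ j ∈ Finset.range (m + 1),
                (-((n : ℝ) ^ (-(1 : ℝ) / 2)) • ((X n ω)⁻¹ * Y n ω)) ^ j * (X n ω)⁻¹)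
        (fun n => (n : ℝ) ^ (-((m : ℝ) + 1) / 2)) :=
  geometric_expansion_random_matrix_inverse_general P X Y hXinv hXYinv hXinvOp hYOp
end
end

section
/- Expansion of the efficient-weighted sample moment under correct specification: assume the moment condition is correctly specified, E[g(Xᵢ,θ₀)] = 0, the data are i.i.d., Ω = Ω(θ₀) is nonsingular, Ω_n(θ₀) is invertible with probability approaching one, and E‖g(Xᵢ,θ₀)‖⁴ < ∞ and E‖G(Xᵢ)‖⁴ < ∞. Then G_n′[Ω_n(θ₀)]⁻¹g_n(θ₀) = G′Ω⁻¹g_n(θ₀) + (G_n − G)′Ω⁻¹g_n(θ₀) − G′Ω⁻¹(Ω_n(θ₀) − Ω)Ω⁻¹g_n(θ₀) + O_p(n^{−3/2}), where the first displayed term is O_p(n^{−1/2}) and the second and third are O_p(n⁻¹). -/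
open Matrix Filter MeasureTheory ProbabilityTheory

attribute [local instance] Matrix.normedAddCommGroup

noncomputable section

namespace EWSME

variable {Ωs : Type*} [MeasurableSpace Ωs] {P : Measure Ωs}

lemma IsBigOp.congr_rate {E : Type*} [SeminormedAddGroup E] {Z : ℕ → Ωs → E} {a b : ℕ → ℝ}
    (h : IsBigOp P Z a) (hab : ∀ᶠ n in atTop, a n = b n) : IsBigOp P Z b := by
  intro ε hε
  obtain ⟨M, hM, hev⟩ := h ε hε
  refine ⟨M, hM, ?_⟩
  filter_upwards [hev, hab] with n h1 h2
  rwa [← h2]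

lemma isBigOp_le_bound {E F : Type*} [SeminormedAddGroup E] [SeminormedAddGroup F]
    {U : ℕ → Ωs → E} {Z : ℕ → Ωs → F} {a : ℕ → ℝ} {C : ℝ} (hC : 0 ≤ C)
    (hbound : ∀ n ω, ‖U n ω‖ ≤ C * ‖Z n ω‖) (hZ : IsBigOp P Z a) :
    IsBigOp P U a := by
  intro ε hε
  obtain ⟨M, hM, hev⟩ := hZ ε hε
  refine ⟨C * M + 1, by positivity, ?_⟩
  filter_upwards [hev] with n h1
  refine lt_of_le_of_lt (measure_mono ?_) h1
  intro ω hω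
  by_contra hcon
  simp only [Set.mem_setOf_eq, not_lt] at hω hcon
  have hUnn : (0:ℝ) ≤ ‖U n ω‖ := norm_nonneg _
  have hZnn : (0:ℝ) ≤ ‖Z n ω‖ := norm_nonneg _
  rcases le_or_gt (a n) 0 with hle | hpos
  · have : ‖U n ω‖ / a n ≤ 0 := div_nonpos_of_nonneg_of_nonpos hUnn hle
    nlinarith
  · have h2 : ‖Z n ω‖ ≤ M * a n := (div_le_iff₀ hpos).1 hcon
    have h3 : ‖U n ω‖ / a n ≤ C * M := by
      rw [div_le_iff₀ hpos]
      nlinarith [hbound n ω]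
    nlinarith

lemma isBigOp_mul_bound {E F E' : Type*} [SeminormedAddGroup E] [SeminormedAddGroup F] [SeminormedAddGroup E']
    {U : ℕ → Ωs → E'} {Z : ℕ → Ωs → E} {W : ℕ → Ωs → F} {a b : ℕ → ℝ} {C : ℝ}
    (hC : 0 ≤ C)
    (hbound : ∀ n ω, ‖U n ω‖ ≤ C * ‖Z n ω‖ * ‖W n ω‖)
    (hZ : IsBigOp P Z a) (hW : IsBigOp P W b)
    (ha : ∀ᶠ n in atTop, 0 < a n) (hb : ∀ᶠ n in atTop, 0 < b n) :
    IsBigOp P U (fun n => a n * b n) := by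
  intro ε hε
  obtain ⟨M₁, hM₁, hev₁⟩ := hZ (ε / 2) (by positivity)
  obtain ⟨M₂, hM₂, hev₂⟩ := hW (ε / 2) (by positivity)
  refine ⟨C * M₁ * M₂ + 1, by positivity, ?_⟩
  filter_upwards [hev₁, hev₂, ha, hb] with n h1 h2 ha' hb'
  have hsub : {ω | C * M₁ * M₂ + 1 < ‖U n ω‖ / (a n * b n)} ⊆
      {ω | M₁ < ‖Z n ω‖ / a n} ∪ {ω | M₂ < ‖W n ω‖ / b n} := by
    intro ω hω
    by_contra hcon
    simp only [Set.mem_union, Set.mem_setOf_eq, not_or, not_lt] at hω hcon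
    have hZ' : ‖Z n ω‖ ≤ M₁ * a n := (div_le_iff₀ ha').1 hcon.1
    have hW' : ‖W n ω‖ ≤ M₂ * b n := (div_le_iff₀ hb').1 hcon.2
    have hZnn : (0:ℝ) ≤ ‖Z n ω‖ := norm_nonneg _
    have hWnn : (0:ℝ) ≤ ‖W n ω‖ := norm_nonneg _
    have h4 : ‖U n ω‖ / (a n * b n) ≤ C * M₁ * M₂ := by
      rw [div_le_iff₀ (by positivity)]
      nlinarith [hbound n ω, mul_le_mul hZ' hW' hWnn (by positivity : (0:ℝ) ≤ M₁ * a n)]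
    nlinarith
  calc P {ω | C * M₁ * M₂ + 1 < ‖U n ω‖ / (a n * b n)}
      ≤ P ({ω | M₁ < ‖Z n ω‖ / a n} ∪ {ω | M₂ < ‖W n ω‖ / b n}) := measure_mono hsub
    _ ≤ P {ω | M₁ < ‖Z n ω‖ / a n} + P {ω | M₂ < ‖W n ω‖ / b n} := measure_union_le _ _
    _ < ENNReal.ofReal (ε / 2) + ENNReal.ofReal (ε / 2) := ENNReal.add_lt_add h1 h2
    _ = ENNReal.ofReal ε := by
        rw [← ENNReal.ofReal_add (by positivity) (by positivity), add_halves]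

lemma isBigOp_norm_add {E F : Type*} [SeminormedAddGroup E] [SeminormedAddGroup F]
    {Z : ℕ → Ωs → E} {W : ℕ → Ωs → F} {a : ℕ → ℝ}
    (hZ : IsBigOp P Z a) (hW : IsBigOp P W a) :
    IsBigOp P (fun n ω => (‖Z n ω‖ + ‖W n ω‖ : ℝ)) a := by
  intro ε hε
  obtain ⟨M₁, hM₁, hev₁⟩ := hZ (ε / 2) (by positivity)
  obtain ⟨M₂, hM₂, hev₂⟩ := hW (ε / 2) (by positivity)
  refine ⟨M₁ + M₂, by positivity, ?_⟩
  filter_upwards [hev₁, hev₂] with n h1 h2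
  have hsub : {ω | M₁ + M₂ < ‖(‖Z n ω‖ + ‖W n ω‖ : ℝ)‖ / a n} ⊆
      {ω | M₁ < ‖Z n ω‖ / a n} ∪ {ω | M₂ < ‖W n ω‖ / a n} := by
    intro ω hω
    by_contra hcon
    simp only [Set.mem_union, Set.mem_setOf_eq, not_or, not_lt] at hω hcon
    have hZnn : (0:ℝ) ≤ ‖Z n ω‖ := norm_nonneg _
    have hWnn : (0:ℝ) ≤ ‖W n ω‖ := norm_nonneg _
    have habs : ‖(‖Z n ω‖ + ‖W n ω‖ : ℝ)‖ = ‖Z n ω‖ + ‖W n ω‖ := by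
      rw [Real.norm_eq_abs, abs_of_nonneg (by positivity)]
    rw [habs] at hω
    rcases le_or_gt (a n) 0 with hle | hpos
    · have : (‖Z n ω‖ + ‖W n ω‖) / a n ≤ 0 :=
        div_nonpos_of_nonneg_of_nonpos (by positivity) hle
      nlinarith
    · have hZ' : ‖Z n ω‖ ≤ M₁ * a n := (div_le_iff₀ hpos).1 hcon.1
      have hW' : ‖W n ω‖ ≤ M₂ * a n := (div_le_iff₀ hpos).1 hcon.2
      have : (‖Z n ω‖ + ‖W n ω‖) / a n ≤ M₁ + M₂ := by
        rw [div_le_iff₀ hpos]; nlinarith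
      nlinarith
  calc P {ω | M₁ + M₂ < ‖(fun n ω => (‖Z n ω‖ + ‖W n ω‖ : ℝ)) n ω‖ / a n}
      ≤ P ({ω | M₁ < ‖Z n ω‖ / a n} ∪ {ω | M₂ < ‖W n ω‖ / a n}) := measure_mono hsub
    _ ≤ P {ω | M₁ < ‖Z n ω‖ / a n} + P {ω | M₂ < ‖W n ω‖ / a n} := measure_union_le _ _
    _ < ENNReal.ofReal (ε / 2) + ENNReal.ofReal (ε / 2) := ENNReal.add_lt_add h1 h2
    _ = ENNReal.ofReal ε := by
        rw [← ENNReal.ofReal_add (by positivity) (by positivity), add_halves]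

end EWSME

namespace EWSME
variable {Ωs : Type*} [MeasurableSpace Ωs] {P : Measure Ωs}

lemma isBigOp_of_components {ι : Type*} [Fintype ι] {E : Type*} [SeminormedAddGroup E]
    {Z : ℕ → Ωs → E} {W : ι → ℕ → Ωs → ℝ} {a : ℕ → ℝ}
    (hW : ∀ r, IsBigOp P (W r) a)
    (hle : ∀ n ω (M : ℝ), 0 ≤ M → (∀ r, ‖W r n ω‖ ≤ M) → ‖Z n ω‖ ≤ M) :
    IsBigOp P Z a := by
  intro ε hε
  set ε' : ℝ := ε / (Fintype.card ι + 1) with hε'def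
  have hε' : 0 < ε' := by positivity
  choose M hMpos hMev using fun r => hW r ε' hε'
  set Mt : ℝ := 1 + ∑ r, M r with hMtdef
  have hMsum : (0:ℝ) ≤ ∑ r, M r := Finset.sum_nonneg fun r _ => (hMpos r).le
  have hMt : 0 < Mt := by positivity
  refine ⟨Mt, hMt, ?_⟩
  have hall : ∀ᶠ n in atTop, ∀ r, P {ω | M r < ‖W r n ω‖ / a n} < ENNReal.ofReal ε' :=
    eventually_all.2 hMev
  filter_upwards [hall] with n h1
  have hsub : {ω | Mt < ‖Z n ω‖ / a n} ⊆
      ⋃ r ∈ (Finset.univ : Finset ι), {ω | M r < ‖W r n ω‖ / a n} := by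
    intro ω hω
    by_contra hcon
    simp only [Set.mem_iUnion, Set.mem_setOf_eq, not_exists, not_lt,
      Finset.mem_univ, exists_prop, true_and] at hcon
    simp only [Set.mem_setOf_eq] at hω
    rcases le_or_gt (a n) 0 with hle' | hpos
    · have : ‖Z n ω‖ / a n ≤ 0 := div_nonpos_of_nonneg_of_nonpos (norm_nonneg _) hle'
      nlinarith
    · have hZle : ‖Z n ω‖ ≤ Mt * a n := by
        refine hle n ω (Mt * a n) (by positivity) fun r => ?_
        have h2 : ‖W r n ω‖ ≤ M r * a n := (div_le_iff₀ hpos).1 (hcon r)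
        have h3 : M r ≤ Mt := by
          have := Finset.single_le_sum (fun r _ => (hMpos r).le) (Finset.mem_univ r)
          nlinarith
        nlinarith
      have : ‖Z n ω‖ / a n ≤ Mt := (div_le_iff₀ hpos).2 hZle
      nlinarith
  calc P {ω | Mt < ‖Z n ω‖ / a n}
      ≤ P (⋃ r ∈ (Finset.univ : Finset ι), {ω | M r < ‖W r n ω‖ / a n}) := measure_mono hsub
    _ ≤ ∑ r ∈ Finset.univ, P {ω | M r < ‖W r n ω‖ / a n} := measure_biUnion_finset_le _ _
    _ ≤ ∑ _r ∈ (Finset.univ : Finset ι), ENNReal.ofReal ε' :=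
        Finset.sum_le_sum fun r _ => (h1 r).le
    _ = (Fintype.card ι : ENNReal) * ENNReal.ofReal ε' := by
        rw [Finset.sum_const, nsmul_eq_mul]; rfl
    _ = ENNReal.ofReal ((Fintype.card ι : ℝ) * ε') := by
        rw [ENNReal.ofReal_mul (by positivity), ENNReal.ofReal_natCast]
    _ < ENNReal.ofReal ε := by
        rw [ENNReal.ofReal_lt_ofReal_iff hε, hε'def]
        have hcard : (0:ℝ) < (Fintype.card ι : ℝ) + 1 := by positivity
        rw [mul_div_assoc', div_lt_iff₀ hcard]
        nlinarith

lemma isBigOp_of_le_off_event {E F : Type*} [SeminormedAddGroup E] [SeminormedAddGroup F]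
    {T : ℕ → Ωs → E} {f : ℕ → Ωs → F} {a : ℕ → ℝ} {S : ℕ → Set Ωs}
    (hS : Tendsto (fun n => P (S n)) atTop (nhds 0))
    (hle : ∀ n ω, ω ∉ S n → ‖T n ω‖ ≤ ‖f n ω‖)
    (hf : IsBigOp P f a) : IsBigOp P T a := by
  intro ε hε
  obtain ⟨M, hM, hev⟩ := hf (ε / 2) (by positivity)
  refine ⟨M, hM, ?_⟩
  have hSev : ∀ᶠ n in atTop, P (S n) < ENNReal.ofReal (ε / 2) :=
    hS.eventually_lt_const (by simp [ENNReal.ofReal_pos]; positivity)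
  filter_upwards [hev, hSev] with n h1 h2
  have hsub : {ω | M < ‖T n ω‖ / a n} ⊆ S n ∪ {ω | M < ‖f n ω‖ / a n} := by
    intro ω hω
    by_contra hcon
    simp only [Set.mem_union, Set.mem_setOf_eq, not_or, not_lt] at hcon
    simp only [Set.mem_setOf_eq] at hω
    rcases le_or_gt (a n) 0 with hle' | hpos
    · have : ‖T n ω‖ / a n ≤ 0 := div_nonpos_of_nonneg_of_nonpos (norm_nonneg _) hle'
      nlinarith
    · have h3 : ‖f n ω‖ ≤ M * a n := (div_le_iff₀ hpos).1 hcon.2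
      have h4 : ‖T n ω‖ ≤ M * a n := le_trans (hle n ω hcon.1) h3
      have : ‖T n ω‖ / a n ≤ M := (div_le_iff₀ hpos).2 h4
      nlinarith
  calc P {ω | M < ‖T n ω‖ / a n} ≤ P (S n ∪ {ω | M < ‖f n ω‖ / a n}) := measure_mono hsub
    _ ≤ P (S n) + P {ω | M < ‖f n ω‖ / a n} := measure_union_le _ _
    _ < ENNReal.ofReal (ε / 2) + ENNReal.ofReal (ε / 2) := ENNReal.add_lt_add h2 h1
    _ = ENNReal.ofReal ε := by
        rw [← ENNReal.ofReal_add (by positivity) (by positivity), add_halves]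

lemma IsBigOp.tendsto_measure_zero {E : Type*} [SeminormedAddGroup E]
    {Z : ℕ → Ωs → E} {a : ℕ → ℝ} (h : IsBigOp P Z a)
    (ha0 : Tendsto a atTop (nhds 0)) (ha : ∀ᶠ n in atTop, 0 < a n)
    {δ : ℝ} (hδ : 0 < δ) :
    Tendsto (fun n => P {ω | δ < ‖Z n ω‖}) atTop (nhds 0) := by
  rw [ENNReal.tendsto_nhds_zero]
  intro ε' hε'
  rcases eq_or_ne ε' ⊤ with rfl | htop
  · exact Eventually.of_forall fun n => le_top
  have hεtoReal : 0 < ε'.toReal := ENNReal.toReal_pos hε'.ne' htop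
  obtain ⟨M, hM, hev⟩ := h ε'.toReal hεtoReal
  have hasmall : ∀ᶠ n in atTop, a n < δ / M :=
    ha0.eventually_lt_const (by positivity)
  filter_upwards [hev, hasmall, ha] with n h1 h2 h3
  have hsub : {ω | δ < ‖Z n ω‖} ⊆ {ω | M < ‖Z n ω‖ / a n} := by
    intro ω hω
    simp only [Set.mem_setOf_eq] at hω ⊢
    have hMlt : M < δ / a n := (lt_div_iff₀ h3).2 (by nlinarith [(lt_div_iff₀ hM).1 h2])
    have hdd : δ / a n ≤ ‖Z n ω‖ / a n := by gcongr
    exact lt_of_lt_of_le hMlt hdd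
  calc P {ω | δ < ‖Z n ω‖} ≤ P {ω | M < ‖Z n ω‖ / a n} := measure_mono hsub
    _ ≤ ENNReal.ofReal ε'.toReal := h1.le
    _ = ε' := ENNReal.ofReal_toReal htop

end EWSME

namespace EWSME

lemma norm_mulVec_le {m n : ℕ} (A : Matrix (Fin m) (Fin n) ℝ) (v : Fin n → ℝ) :
    ‖A *ᵥ v‖ ≤ n * ‖A‖ * ‖v‖ := by
  have hnn : (0:ℝ) ≤ (n : ℝ) * ‖A‖ * ‖v‖ := by positivity
  rw [pi_norm_le_iff_of_nonneg hnn]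
  intro r
  calc ‖(A *ᵥ v) r‖ = |∑ c, A r c * v c| := by
        simp [Matrix.mulVec, dotProduct, Real.norm_eq_abs]
    _ ≤ ∑ c, |A r c * v c| := Finset.abs_sum_le_sum_abs _ _
    _ ≤ ∑ _c : Fin n, ‖A‖ * ‖v‖ := by
        refine Finset.sum_le_sum fun c _ => ?_
        rw [abs_mul]
        have h1 : |A r c| ≤ ‖A‖ := A.norm_entry_le_entrywise_sup_norm
        have h2 : |v c| ≤ ‖v‖ := norm_le_pi_norm v c
        have := mul_le_mul h1 h2 (abs_nonneg _) (le_trans (abs_nonneg _) h1)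
        simpa using this
    _ = n * ‖A‖ * ‖v‖ := by
        rw [Finset.sum_const, Finset.card_univ, Fintype.card_fin, nsmul_eq_mul]; ring

lemma norm_matMul_le {m n p : ℕ} (A : Matrix (Fin m) (Fin n) ℝ)
    (B : Matrix (Fin n) (Fin p) ℝ) : ‖A * B‖ ≤ n * ‖A‖ * ‖B‖ := by
  have hnn : (0:ℝ) ≤ (n : ℝ) * ‖A‖ * ‖B‖ := by positivity
  rw [Matrix.norm_le_iff hnn]
  intro r c
  calc ‖(A * B) r c‖ = |∑ j, A r j * B j c| := by
        simp [Matrix.mul_apply, Real.norm_eq_abs]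
    _ ≤ ∑ j, |A r j * B j c| := Finset.abs_sum_le_sum_abs _ _
    _ ≤ ∑ _j : Fin n, ‖A‖ * ‖B‖ := by
        refine Finset.sum_le_sum fun j _ => ?_
        rw [abs_mul]
        have h1 : |A r j| ≤ ‖A‖ := A.norm_entry_le_entrywise_sup_norm
        have h2 : |B j c| ≤ ‖B‖ := B.norm_entry_le_entrywise_sup_norm
        have := mul_le_mul h1 h2 (abs_nonneg _) (le_trans (abs_nonneg _) h1)
        simpa using this
    _ = n * ‖A‖ * ‖B‖ := by
        rw [Finset.sum_const, Finset.card_univ, Fintype.card_fin, nsmul_eq_mul]; ring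

lemma norm_transpose_eq {m n : ℕ} (A : Matrix (Fin m) (Fin n) ℝ) : ‖Aᵀ‖ = ‖A‖ := by
  apply le_antisymm
  · rw [Matrix.norm_le_iff (norm_nonneg A)]
    intro r c
    exact A.norm_entry_le_entrywise_sup_norm
  · rw [Matrix.norm_le_iff (norm_nonneg Aᵀ)]
    intro r c
    exact Aᵀ.norm_entry_le_entrywise_sup_norm

end EWSME

namespace EWSME
variable {Ωs : Type*} [MeasurableSpace Ωs] {P : Measure Ωs}

lemma chebyshev_isBigOp [IsProbabilityMeasure P]
    {dx : ℕ} {X : ℕ → Ωs → (Fin dx → ℝ)} (hXmeas : ∀ i, Measurable (X i))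
    (hindep : iIndepFun X P)
    (hident : ∀ i : ℕ, IdentDistrib (X i) (X 0) P P)
    (h : (Fin dx → ℝ) → ℝ) (hh : Measurable h)
    (hL2 : MemLp (fun ω => h (X 0 ω)) 2 P) (μ0 : ℝ)
    (hμ0 : ∫ ω, h (X 0 ω) ∂P = μ0) :
    IsBigOp P (fun n ω => (n : ℝ)⁻¹ * ∑ i ∈ Finset.range n, h (X i ω) - μ0)
      (fun n => (n : ℝ) ^ (-(1:ℝ)/2)) := by
  set Y : ℕ → Ωs → ℝ := fun i ω => h (X i ω) with hYdef
  have hYmeas : ∀ i, Measurable (Y i) := fun i => hh.comp (hXmeas i)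
  have hYid : ∀ i, IdentDistrib (Y i) (Y 0) P P := fun i => (hident i).comp hh
  have hYL2 : ∀ i, MemLp (Y i) 2 P := fun i => (hYid i).symm.memLp_snd hL2
  have hYint : ∀ i, ∫ ω, Y i ω ∂P = μ0 := fun i => by
    rw [hYdef]; rw [← hμ0]; exact (hYid i).integral_eq
  have hYindep : ∀ i j, i ≠ j → IndepFun (Y i) (Y j) P := by
    intro i j hij
    exact (hindep.comp (fun _ => h) (fun _ => hh)).indepFun hij
  set σ2 : ℝ := variance (Y 0) P with hσ2def
  have hσ2 : 0 ≤ σ2 := variance_nonneg _ _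
  -- variance and expectation of the partial sums
  have hSL2 : ∀ n : ℕ, MemLp (∑ i ∈ Finset.range n, Y i) 2 P := fun n =>
    memLp_finset_sum' _ fun i _ => hYL2 i
  have hVar : ∀ n : ℕ, variance (∑ i ∈ Finset.range n, Y i) P = n * σ2 := by
    intro n
    rw [IndepFun.variance_sum (fun i _ => hYL2 i)
      (fun i _ j _ hij => hYindep i j hij)]
    rw [Finset.sum_congr rfl fun i _ => (hYid i).variance_eq]
    simp [hσ2def, Finset.sum_const, nsmul_eq_mul]
  have hES : ∀ n : ℕ, (∫ ω, (∑ i ∈ Finset.range n, Y i) ω ∂P) = n * μ0 := by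
    intro n
    simp only [Finset.sum_apply]
    rw [integral_finset_sum _ fun i _ => (hYL2 i).integrable one_le_two]
    rw [Finset.sum_congr rfl fun i _ => hYint i]
    simp [nsmul_eq_mul]
  intro ε hε
  set M : ℝ := Real.sqrt (2 * σ2 / ε) + 1 with hMdef
  have hM : 0 < M := by positivity
  have hM2 : σ2 / M ^ 2 < ε := by
    have hsq : Real.sqrt (2 * σ2 / ε) ^ 2 = 2 * σ2 / ε :=
      Real.sq_sqrt (by positivity)
    have hsnn : 0 ≤ Real.sqrt (2 * σ2 / ε) := Real.sqrt_nonneg _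
    rw [div_lt_iff₀ (by positivity)]
    have : M ^ 2 ≥ 2 * σ2 / ε + 1 := by nlinarith
    have h2 : M ^ 2 * ε ≥ (2 * σ2 / ε + 1) * ε := by nlinarith
    have h3 : (2 * σ2 / ε + 1) * ε = 2 * σ2 + ε := by field_simp
    rw [h3] at h2
    nlinarith [h2]
  refine ⟨M, hM, ?_⟩
  filter_upwards [eventually_ge_atTop 1] with n hn
  have hnpos : (0:ℝ) < n := by exact_mod_cast hn
  have hsqpos : (0:ℝ) < Real.sqrt n := Real.sqrt_pos.2 hnpos
  -- the rate
  have hrate : ((n:ℝ) ^ (-(1:ℝ)/2)) = (Real.sqrt n)⁻¹ := by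
    rw [Real.sqrt_eq_rpow, ← Real.rpow_neg hnpos.le]
    norm_num
  -- set inclusion into the Chebyshev event
  have hsub : {ω | M < ‖(n : ℝ)⁻¹ * ∑ i ∈ Finset.range n, h (X i ω) - μ0‖ /
        ((n:ℝ) ^ (-(1:ℝ)/2))} ⊆
      {ω | M * Real.sqrt n ≤ |(∑ i ∈ Finset.range n, Y i) ω -
        (∫ ω', (∑ i ∈ Finset.range n, Y i) ω' ∂P)|} := by
    intro ω hω
    simp only [Set.mem_setOf_eq] at hω ⊢
    rw [hrate, div_eq_mul_inv, inv_inv] at hω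
    rw [hES n, Finset.sum_apply]
    have hZval : (n : ℝ)⁻¹ * ∑ i ∈ Finset.range n, Y i ω - μ0
        = (n:ℝ)⁻¹ * ((∑ i ∈ Finset.range n, Y i ω) - n * μ0) := by
      field_simp
    have : M < (n:ℝ)⁻¹ * |(∑ i ∈ Finset.range n, Y i ω) - n * μ0| * Real.sqrt n := by
      rw [Real.norm_eq_abs] at hω
      calc M < |(n : ℝ)⁻¹ * ∑ i ∈ Finset.range n, Y i ω - μ0| * Real.sqrt n := hω
        _ = (n:ℝ)⁻¹ * |(∑ i ∈ Finset.range n, Y i ω) - n * μ0| * Real.sqrt n := by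
            rw [hZval, abs_mul, abs_of_nonneg (by positivity : (0:ℝ) ≤ (n:ℝ)⁻¹)]
    have hkey : (n:ℝ)⁻¹ * Real.sqrt n = (Real.sqrt n)⁻¹ := by
      rw [← Real.sqrt_mul_self hnpos.le]
      field_simp
      exact Real.sq_sqrt (Real.sqrt_nonneg _)
    have h5 : M < |(∑ i ∈ Finset.range n, Y i ω) - n * μ0| / Real.sqrt n := by
      rw [div_eq_mul_inv, ← hkey]; nlinarith
    have := (lt_div_iff₀ hsqpos).1 h5
    linarith
  refine lt_of_le_of_lt (measure_mono hsub) ?_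
  have hcheb := meas_ge_le_variance_div_sq (μ := P) (hSL2 n)
    (mul_pos hM hsqpos)
  refine lt_of_le_of_lt hcheb ?_
  rw [ENNReal.ofReal_lt_ofReal_iff hε]
  have hvv : variance (∑ i ∈ Finset.range n, Y i) P / (M * Real.sqrt n) ^ 2
      = σ2 / M ^ 2 := by
    rw [hVar n, mul_pow, Real.sq_sqrt hnpos.le]
    field_simp
  rw [hvv]
  exact hM2

end EWSME

open EWSME


set_option maxHeartbeats 1000000 in
/-- **Expansion of the efficient-weighted sample moment under correct specification.**
If `E[g(Xᵢ,θ₀)] = 0`, the data are i.i.d., `Ω = Ω(θ₀)` is nonsingular, `Ω_n(θ₀)` is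
invertible with probability approaching one, and fourth moments are finite, then
`G_n′[Ω_n(θ₀)]⁻¹g_n(θ₀) = G′Ω⁻¹g_n(θ₀) + (G_n − G)′Ω⁻¹g_n(θ₀)
  − G′Ω⁻¹(Ω_n(θ₀) − Ω)Ω⁻¹g_n(θ₀) + O_p(n^{−3/2})`,
where the first displayed term is `O_p(n^{−1/2})` and the second and third are
`O_p(n⁻¹)`. -/
theorem efficient_weighted_sample_moment_expansion
    {Ωs : Type*} [MeasurableSpace Ωs] (P : Measure Ωs) [IsProbabilityMeasure P]
    {dx q k : ℕ} (hqk : k < q)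
    -- the i.i.d. observations
    (X : ℕ → Ωs → (Fin dx → ℝ)) (hXmeas : ∀ i, Measurable (X i))
    (hindep : iIndepFun X P)
    (hident : ∀ i : ℕ, IdentDistrib (X i) (X 0) P P)
    -- the linear moment function and its Jacobian
    (a : (Fin dx → ℝ) → (Fin q → ℝ)) (ha : Measurable a)
    (B : (Fin dx → ℝ) → Matrix (Fin q) (Fin k) ℝ)
    (hB : ∀ r c, Measurable fun x => B x r c)
    (g : (Fin dx → ℝ) → (Fin k → ℝ) → (Fin q → ℝ))
    (hg : ∀ x θ, g x θ = a x + B x *ᵥ θ)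
    -- the true value `θ₀`: correct specification `E[g(Xᵢ,θ₀)] = 0`
    (θ0 : Fin k → ℝ)
    (hcorrect : ∀ r : Fin q, ∫ ω, g (X 0 ω) θ0 r ∂P = 0)
    -- population quantities
    (G : Matrix (Fin q) (Fin k) ℝ) (hG : ∀ r c, G r c = ∫ ω, B (X 0 ω) r c ∂P)
    (Ωm : Matrix (Fin q) (Fin q) ℝ)
    (hΩm : ∀ r c, Ωm r c = ∫ ω, g (X 0 ω) θ0 r * g (X 0 ω) θ0 c ∂P)
    (hΩunit : IsUnit Ωm.det)
    -- fourth moments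
    (hmom_g : Integrable (fun ω => ‖g (X 0 ω) θ0‖ ^ 4) P)
    (hmom_G : Integrable (fun ω => ‖B (X 0 ω)‖ ^ 4) P)
    -- sample moments
    (gn : ℕ → Ωs → (Fin q → ℝ))
    (hgn : ∀ n ω, gn n ω = (n : ℝ)⁻¹ • ∑ i ∈ Finset.range n, g (X i ω) θ0)
    (Gn : ℕ → Ωs → Matrix (Fin q) (Fin k) ℝ)
    (hGn : ∀ n ω, Gn n ω = (n : ℝ)⁻¹ • ∑ i ∈ Finset.range n, B (X i ω))
    (Ωn : ℕ → Ωs → Matrix (Fin q) (Fin q) ℝ)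
    (hΩn : ∀ n ω, Ωn n ω =
      (n : ℝ)⁻¹ • ∑ i ∈ Finset.range n, vecMulVec (g (X i ω) θ0) (g (X i ω) θ0))
    -- `Ω_n(θ₀)` is invertible with probability approaching one
    (hΩninv : Tendsto (fun n => P {ω | ¬ IsUnit (Ωn n ω).det}) atTop (nhds 0)) :
    -- conclusion: the expansion with its stochastic orders
    IsBigOp P
      (fun n ω =>
        (Gn n ω)ᵀ *ᵥ ((Ωn n ω)⁻¹ *ᵥ gn n ω)
          - Gᵀ *ᵥ (Ωm⁻¹ *ᵥ gn n ω)
          - (Gn n ω - G)ᵀ *ᵥ (Ωm⁻¹ *ᵥ gn n ω)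
          + Gᵀ *ᵥ (Ωm⁻¹ *ᵥ ((Ωn n ω - Ωm) *ᵥ (Ωm⁻¹ *ᵥ gn n ω))))
      (fun n => (n : ℝ) ^ (-(3 : ℝ) / 2))
    ∧ IsBigOp P (fun n ω => Gᵀ *ᵥ (Ωm⁻¹ *ᵥ gn n ω))
        (fun n => (n : ℝ) ^ (-(1 : ℝ) / 2))
    ∧ IsBigOp P (fun n ω => (Gn n ω - G)ᵀ *ᵥ (Ωm⁻¹ *ᵥ gn n ω))
        (fun n => (n : ℝ)⁻¹)
    ∧ IsBigOp P (fun n ω => Gᵀ *ᵥ (Ωm⁻¹ *ᵥ ((Ωn n ω - Ωm) *ᵥ (Ωm⁻¹ *ᵥ gn n ω))))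
        (fun n => (n : ℝ)⁻¹) := by
  -- notation
  set rate : ℕ → ℝ := fun n => (n : ℝ) ^ (-(1:ℝ)/2) with hrdef
  -- measurability of the coordinates of g
  have hgr : ∀ r : Fin q, Measurable (fun x => g x θ0 r) := by
    intro r
    have : (fun x => g x θ0 r) = fun x => a x r + ∑ c, B x r c * θ0 c := by
      funext x
      rw [hg x θ0]
      simp [Matrix.mulVec, dotProduct]
    rw [this]
    exact ((measurable_pi_apply r).comp ha).add
      (Finset.measurable_sum _ fun c _ => (hB r c).mul_const _)
  -- L² bounds
  have hsq_le : ∀ (t u : ℝ), |t| ≤ u → t ^ 2 ≤ 1 + u ^ 4 := by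
    intro t u htu
    have h1 : 0 ≤ |t| := abs_nonneg t
    have h2 : t ^ 2 ≤ u ^ 2 := by nlinarith [sq_abs t]
    nlinarith [sq_nonneg (u ^ 2 - 1)]
  have hL2g : ∀ r : Fin q, MemLp (fun ω => g (X 0 ω) θ0 r) 2 P := by
    intro r
    have hmeas : Measurable (fun ω => g (X 0 ω) θ0 r) := (hgr r).comp (hXmeas 0)
    rw [memLp_two_iff_integrable_sq hmeas.aestronglyMeasurable]
    refine Integrable.mono' ((integrable_const 1).add hmom_g)
      (hmeas.pow_const 2).aestronglyMeasurable (ae_of_all _ fun ω => ?_)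
    have h1 : |g (X 0 ω) θ0 r| ≤ ‖g (X 0 ω) θ0‖ := by
      have := norm_le_pi_norm (g (X 0 ω) θ0) r
      rwa [Real.norm_eq_abs] at this
    have := hsq_le _ _ h1
    simpa [abs_of_nonneg (sq_nonneg (g (X 0 ω) θ0 r))] using this
  have hL2B : ∀ (r : Fin q) (c : Fin k), MemLp (fun ω => B (X 0 ω) r c) 2 P := by
    intro r c
    have hmeas : Measurable (fun ω => B (X 0 ω) r c) := (hB r c).comp (hXmeas 0)
    rw [memLp_two_iff_integrable_sq hmeas.aestronglyMeasurable]
    refine Integrable.mono' ((integrable_const 1).add hmom_G)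
      (hmeas.pow_const 2).aestronglyMeasurable (ae_of_all _ fun ω => ?_)
    have h1 : |B (X 0 ω) r c| ≤ ‖B (X 0 ω)‖ := by
      have := (B (X 0 ω)).norm_entry_le_entrywise_sup_norm (i := r) (j := c)
      rwa [Real.norm_eq_abs] at this
    have := hsq_le _ _ h1
    simpa [abs_of_nonneg (sq_nonneg (B (X 0 ω) r c))] using this
  have hL2gg : ∀ (r c : Fin q), MemLp (fun ω => g (X 0 ω) θ0 r * g (X 0 ω) θ0 c) 2 P := by
    intro r c
    have hmeas : Measurable (fun ω => g (X 0 ω) θ0 r * g (X 0 ω) θ0 c) :=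
      ((hgr r).comp (hXmeas 0)).mul ((hgr c).comp (hXmeas 0))
    rw [memLp_two_iff_integrable_sq hmeas.aestronglyMeasurable]
    refine Integrable.mono' ((integrable_const 1).add hmom_g)
      (hmeas.pow_const 2).aestronglyMeasurable (ae_of_all _ fun ω => ?_)
    set t := ‖g (X 0 ω) θ0‖ with htdef
    have ht : 0 ≤ t := norm_nonneg _
    have h1 : |g (X 0 ω) θ0 r| ≤ t := by
      have := norm_le_pi_norm (g (X 0 ω) θ0) r
      rwa [Real.norm_eq_abs] at this
    have h2 : |g (X 0 ω) θ0 c| ≤ t := by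
      have := norm_le_pi_norm (g (X 0 ω) θ0) c
      rwa [Real.norm_eq_abs] at this
    have h3 : |g (X 0 ω) θ0 r * g (X 0 ω) θ0 c| ≤ t ^ 2 := by
      rw [abs_mul]
      nlinarith [abs_nonneg (g (X 0 ω) θ0 r), abs_nonneg (g (X 0 ω) θ0 c)]
    have h4 : (g (X 0 ω) θ0 r * g (X 0 ω) θ0 c) ^ 2 ≤ t ^ 4 := by
      nlinarith [sq_abs (g (X 0 ω) θ0 r * g (X 0 ω) θ0 c), abs_nonneg (g (X 0 ω) θ0 r * g (X 0 ω) θ0 c)]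
    have h5 : (g (X 0 ω) θ0 r * g (X 0 ω) θ0 c) ^ 2 ≤ 1 + t ^ 4 := by nlinarith
    calc ‖(g (X 0 ω) θ0 r * g (X 0 ω) θ0 c) ^ 2‖
        = (g (X 0 ω) θ0 r * g (X 0 ω) θ0 c) ^ 2 := by
          rw [Real.norm_eq_abs, abs_of_nonneg (sq_nonneg _)]
      _ ≤ 1 + t ^ 4 := h5
  -- the three basic O_p facts
  have hv : IsBigOp P gn rate := by
    refine isBigOp_of_components (W := fun (r : Fin q) n ω => gn n ω r) ?_ ?_
    · intro r
      show IsBigOp P (fun n ω => gn n ω r) rate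
      have hcoord : (fun n ω => gn n ω r)
          = fun (n : ℕ) (ω : Ωs) => (n : ℝ)⁻¹ * ∑ i ∈ Finset.range n, (fun x => g x θ0 r) (X i ω) - 0 := by
        funext n ω
        rw [hgn n ω]
        simp [Finset.sum_apply]
      rw [hcoord]
      exact chebyshev_isBigOp hXmeas hindep hident _ (hgr r) (hL2g r) 0 (hcorrect r)
    · intro n ω M hM hle
      exact (pi_norm_le_iff_of_nonneg hM).2 hle
  have hD : IsBigOp P (fun n ω => Gn n ω - G) rate := by
    refine isBigOp_of_components
      (W := fun (rc : Fin q × Fin k) n ω => Gn n ω rc.1 rc.2 - G rc.1 rc.2) ?_ ?_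
    · rintro ⟨r, c⟩
      show IsBigOp P (fun n ω => Gn n ω r c - G r c) rate
      have hcoord : (fun n ω => Gn n ω r c - G r c)
          = fun (n : ℕ) (ω : Ωs) => (n : ℝ)⁻¹ * ∑ i ∈ Finset.range n, (fun x => B x r c) (X i ω)
              - G r c := by
        funext n ω
        rw [hGn n ω]
        simp [Matrix.smul_apply, Matrix.sum_apply, smul_eq_mul]
      rw [hcoord]
      exact chebyshev_isBigOp hXmeas hindep hident _ (hB r c) (hL2B r c) _ (hG r c).symm
    · intro n ω M hM hle
      rw [Matrix.norm_le_iff hM]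
      intro r c
      simpa [Matrix.sub_apply] using hle (r, c)
  have hΔ : IsBigOp P (fun n ω => Ωn n ω - Ωm) rate := by
    refine isBigOp_of_components
      (W := fun (rc : Fin q × Fin q) n ω => Ωn n ω rc.1 rc.2 - Ωm rc.1 rc.2) ?_ ?_
    · rintro ⟨r, c⟩
      show IsBigOp P (fun n ω => Ωn n ω r c - Ωm r c) rate
      have hcoord : (fun n ω => Ωn n ω r c - Ωm r c)
          = fun (n : ℕ) (ω : Ωs) => (n : ℝ)⁻¹ * ∑ i ∈ Finset.range n,
              (fun x => g x θ0 r * g x θ0 c) (X i ω) - Ωm r c := by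
        funext n ω
        rw [hΩn n ω]
        simp [Matrix.smul_apply, Matrix.sum_apply, smul_eq_mul, Matrix.vecMulVec_apply]
      rw [hcoord]
      exact chebyshev_isBigOp hXmeas hindep hident _
        (((hgr r).mul (hgr c))) (hL2gg r c) _ (hΩm r c).symm
    · intro n ω M hM hle
      rw [Matrix.norm_le_iff hM]
      intro r c
      simpa [Matrix.sub_apply] using hle (r, c)
  -- rate facts
  have hrpos : ∀ᶠ n in atTop, 0 < rate n := by
    filter_upwards [eventually_ge_atTop 1] with n hn
    have hnpos : (0:ℝ) < n := by exact_mod_cast hn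
    exact Real.rpow_pos_of_pos hnpos _
  have hrr : ∀ᶠ n in atTop, rate n * rate n = (n:ℝ)⁻¹ := by
    filter_upwards [eventually_ge_atTop 1] with n hn
    have hnpos : (0:ℝ) < n := by exact_mod_cast hn
    rw [hrdef]
    simp only []
    rw [← Real.rpow_add hnpos]
    norm_num [Real.rpow_neg_one]
  set CΩ : ℝ := ‖Ωm⁻¹‖ with hCΩdef
  have hCΩ : 0 ≤ CΩ := norm_nonneg _
  set Q : ℝ := (q : ℝ) with hQdef
  have hQ : 0 ≤ Q := Nat.cast_nonneg q
  -- goal 2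
  have goal2 : IsBigOp P (fun n ω => Gᵀ *ᵥ (Ωm⁻¹ *ᵥ gn n ω)) rate := by
    refine isBigOp_le_bound (C := Q * ‖Gᵀ‖ * (Q * CΩ)) (by positivity) (fun n ω => ?_) hv
    calc ‖Gᵀ *ᵥ (Ωm⁻¹ *ᵥ gn n ω)‖
        ≤ Q * ‖Gᵀ‖ * ‖Ωm⁻¹ *ᵥ gn n ω‖ := norm_mulVec_le _ _
      _ ≤ Q * ‖Gᵀ‖ * (Q * CΩ * ‖gn n ω‖) := by
          have := norm_mulVec_le Ωm⁻¹ (gn n ω)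
          have hnn : (0:ℝ) ≤ Q * ‖Gᵀ‖ := by positivity
          exact mul_le_mul_of_nonneg_left this hnn
      _ = Q * ‖Gᵀ‖ * (Q * CΩ) * ‖gn n ω‖ := by ring
  -- goal 3
  have goal3 : IsBigOp P (fun n ω => (Gn n ω - G)ᵀ *ᵥ (Ωm⁻¹ *ᵥ gn n ω))
      (fun n => (n : ℝ)⁻¹) := by
    refine IsBigOp.congr_rate (a := fun n => rate n * rate n) ?_ hrr
    refine isBigOp_mul_bound (C := Q * (Q * CΩ)) (by positivity)
      (fun n ω => ?_) hD hv hrpos hrpos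
    calc ‖(Gn n ω - G)ᵀ *ᵥ (Ωm⁻¹ *ᵥ gn n ω)‖
        ≤ Q * ‖(Gn n ω - G)ᵀ‖ * ‖Ωm⁻¹ *ᵥ gn n ω‖ := norm_mulVec_le _ _
      _ ≤ Q * ‖(Gn n ω - G)ᵀ‖ * (Q * CΩ * ‖gn n ω‖) := by
          have := norm_mulVec_le Ωm⁻¹ (gn n ω)
          have hnn : (0:ℝ) ≤ Q * ‖(Gn n ω - G)ᵀ‖ := by positivity
          exact mul_le_mul_of_nonneg_left this hnn
      _ = Q * (Q * CΩ) * ‖Gn n ω - G‖ * ‖gn n ω‖ := by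
          rw [norm_transpose_eq]; ring
  -- goal 4
  have goal4 : IsBigOp P
      (fun n ω => Gᵀ *ᵥ (Ωm⁻¹ *ᵥ ((Ωn n ω - Ωm) *ᵥ (Ωm⁻¹ *ᵥ gn n ω))))
      (fun n => (n : ℝ)⁻¹) := by
    refine IsBigOp.congr_rate (a := fun n => rate n * rate n) ?_ hrr
    refine isBigOp_mul_bound (C := Q * ‖Gᵀ‖ * (Q * CΩ) * Q * (Q * CΩ)) (by positivity)
      (fun n ω => ?_) hΔ hv hrpos hrpos
    have h1 : ‖(Ωn n ω - Ωm) *ᵥ (Ωm⁻¹ *ᵥ gn n ω)‖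
        ≤ Q * ‖Ωn n ω - Ωm‖ * (Q * CΩ * ‖gn n ω‖) := by
      calc ‖(Ωn n ω - Ωm) *ᵥ (Ωm⁻¹ *ᵥ gn n ω)‖
          ≤ Q * ‖Ωn n ω - Ωm‖ * ‖Ωm⁻¹ *ᵥ gn n ω‖ := norm_mulVec_le _ _
        _ ≤ Q * ‖Ωn n ω - Ωm‖ * (Q * CΩ * ‖gn n ω‖) := by
            have := norm_mulVec_le Ωm⁻¹ (gn n ω)
            have hnn : (0:ℝ) ≤ Q * ‖Ωn n ω - Ωm‖ := by positivity
            exact mul_le_mul_of_nonneg_left this hnn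
    calc ‖Gᵀ *ᵥ (Ωm⁻¹ *ᵥ ((Ωn n ω - Ωm) *ᵥ (Ωm⁻¹ *ᵥ gn n ω)))‖
        ≤ Q * ‖Gᵀ‖ * ‖Ωm⁻¹ *ᵥ ((Ωn n ω - Ωm) *ᵥ (Ωm⁻¹ *ᵥ gn n ω))‖ := norm_mulVec_le _ _
      _ ≤ Q * ‖Gᵀ‖ * (Q * CΩ * ‖(Ωn n ω - Ωm) *ᵥ (Ωm⁻¹ *ᵥ gn n ω)‖) := by
          have := norm_mulVec_le Ωm⁻¹ ((Ωn n ω - Ωm) *ᵥ (Ωm⁻¹ *ᵥ gn n ω))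
          have hnn : (0:ℝ) ≤ Q * ‖Gᵀ‖ := by positivity
          exact mul_le_mul_of_nonneg_left this hnn
      _ ≤ Q * ‖Gᵀ‖ * (Q * CΩ * (Q * ‖Ωn n ω - Ωm‖ * (Q * CΩ * ‖gn n ω‖))) := by
          have hnn : (0:ℝ) ≤ Q * ‖Gᵀ‖ := by positivity
          have hnn2 : (0:ℝ) ≤ Q * CΩ := by positivity
          exact mul_le_mul_of_nonneg_left (mul_le_mul_of_nonneg_left h1 hnn2) hnn
      _ = Q * ‖Gᵀ‖ * (Q * CΩ) * Q * (Q * CΩ) * ‖Ωn n ω - Ωm‖ * ‖gn n ω‖ := by ring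
  -- goal 1
  set δ : ℝ := 1 / (2 * (Q ^ 2 * CΩ + 1)) with hδdef
  have hδ : 0 < δ := by rw [hδdef]; positivity
  have hδhalf : Q ^ 2 * CΩ * δ ≤ 1 / 2 := by
    rw [hδdef, mul_one_div, div_le_div_iff₀ (by positivity) (by norm_num)]
    nlinarith
  set S : ℕ → Set Ωs := fun n =>
    {ω | ¬ IsUnit (Ωn n ω).det} ∪ {ω | δ < ‖Ωn n ω - Ωm‖} with hSdef
  have hrate0 : Tendsto rate atTop (nhds 0) := by
    have heq : rate = fun n : ℕ => ((n : ℝ)) ^ (-(1/2 : ℝ)) := by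
      funext n; rw [hrdef]; norm_num
    rw [heq]
    exact (tendsto_rpow_neg_atTop (by norm_num : (0:ℝ) < 1/2)).comp
      tendsto_natCast_atTop_atTop
  have hPB : Tendsto (fun n => P {ω | δ < ‖Ωn n ω - Ωm‖}) atTop (nhds 0) :=
    EWSME.IsBigOp.tendsto_measure_zero hΔ hrate0 hrpos hδ
  have hS : Tendsto (fun n => P (S n)) atTop (nhds 0) := by
    have hsum : Tendsto
        (fun n => P {ω | ¬ IsUnit (Ωn n ω).det} + P {ω | δ < ‖Ωn n ω - Ωm‖})
        atTop (nhds 0) := by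
      simpa using hΩninv.add hPB
    exact tendsto_of_tendsto_of_tendsto_of_le_of_le tendsto_const_nhds hsum
      (fun n => zero_le) (fun n => measure_union_le _ _)
  set CG : ℝ := ‖Gᵀ‖ with hCGdef
  have hCG : 0 ≤ CG := norm_nonneg _
  set K0 : ℝ := 2 * Q * CΩ + 2 * Q ^ 3 * CG * CΩ ^ 2 with hK0def
  have hK0 : 0 ≤ K0 := by rw [hK0def]; positivity
  set K : ℝ := Q ^ 3 * CΩ * K0 + 1 with hKdef
  have hK : 0 < K := by rw [hKdef]; positivity
  set f : ℕ → Ωs → ℝ := fun n ω =>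
    K * ((‖Gn n ω - G‖ + ‖Ωn n ω - Ωm‖) * ‖Ωn n ω - Ωm‖) * ‖gn n ω‖ with hfdef
  have hrrpos : ∀ᶠ n in atTop, 0 < rate n * rate n := by
    filter_upwards [hrpos] with n hn; positivity
  have hZ2 : IsBigOp P
      (fun n ω => ((‖Gn n ω - G‖ + ‖Ωn n ω - Ωm‖) * ‖Ωn n ω - Ωm‖ : ℝ))
      (fun n => rate n * rate n) := by
    refine isBigOp_mul_bound (C := 1) zero_le_one (fun n ω => ?_)
      (isBigOp_norm_add hD hΔ) hΔ hrpos hrpos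
    show |(‖Gn n ω - G‖ + ‖Ωn n ω - Ωm‖) * ‖Ωn n ω - Ωm‖|
      ≤ 1 * |‖Gn n ω - G‖ + ‖Ωn n ω - Ωm‖| * ‖Ωn n ω - Ωm‖
    rw [abs_mul, abs_of_nonneg (norm_nonneg (Ωn n ω - Ωm)), one_mul]
  have hf : IsBigOp P f (fun n => rate n * rate n * rate n) := by
    refine isBigOp_mul_bound (C := K) hK.le (fun n ω => ?_) hZ2 hv hrrpos hrpos
    show |K * ((‖Gn n ω - G‖ + ‖Ωn n ω - Ωm‖) * ‖Ωn n ω - Ωm‖) * ‖gn n ω‖|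
      ≤ K * |(‖Gn n ω - G‖ + ‖Ωn n ω - Ωm‖) * ‖Ωn n ω - Ωm‖| * ‖gn n ω‖
    rw [abs_mul, abs_mul, abs_of_nonneg hK.le, abs_of_nonneg (norm_nonneg (gn n ω))]
  have hrate3 : ∀ᶠ n in atTop, rate n * rate n * rate n = (n : ℝ) ^ (-(3:ℝ)/2) := by
    filter_upwards [eventually_ge_atTop 1] with n hn
    have hnpos : (0:ℝ) < n := by exact_mod_cast hn
    rw [hrdef]
    simp only []
    rw [← Real.rpow_add hnpos, ← Real.rpow_add hnpos]
    norm_num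
  have hf' : IsBigOp P f (fun n => (n : ℝ) ^ (-(3:ℝ)/2)) :=
    EWSME.IsBigOp.congr_rate hf hrate3
  have goal1 : IsBigOp P
      (fun n ω =>
        (Gn n ω)ᵀ *ᵥ ((Ωn n ω)⁻¹ *ᵥ gn n ω)
          - Gᵀ *ᵥ (Ωm⁻¹ *ᵥ gn n ω)
          - (Gn n ω - G)ᵀ *ᵥ (Ωm⁻¹ *ᵥ gn n ω)
          + Gᵀ *ᵥ (Ωm⁻¹ *ᵥ ((Ωn n ω - Ωm) *ᵥ (Ωm⁻¹ *ᵥ gn n ω))))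
      (fun n => (n : ℝ) ^ (-(3 : ℝ) / 2)) := by
    refine isBigOp_of_le_off_event hS (fun n ω hω => ?_) hf'
    rw [hSdef] at hω
    simp only [Set.mem_union, Set.mem_setOf_eq, not_or, not_lt, not_not] at hω
    obtain ⟨hU, hsmall⟩ := hω
    -- key inverse identity
    have hkey : (Ωn n ω)⁻¹ * ((Ωn n ω - Ωm) * Ωm⁻¹) = Ωm⁻¹ - (Ωn n ω)⁻¹ := by
      have e1 : (Ωn n ω)⁻¹ * ((Ωn n ω - Ωm) * Ωm⁻¹)
          = (Ωn n ω)⁻¹ * Ωn n ω * Ωm⁻¹ - (Ωn n ω)⁻¹ * (Ωm * Ωm⁻¹) := by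
        simp only [Matrix.sub_mul, Matrix.mul_sub, Matrix.add_mul, Matrix.mul_add, Matrix.mul_assoc]
      rw [e1, Matrix.nonsing_inv_mul _ hU, Matrix.mul_nonsing_inv _ hΩunit,
        Matrix.one_mul, Matrix.mul_one]
    -- bound on the inverse
    have hWi_norm : ‖(Ωn n ω)⁻¹‖ ≤ 2 * CΩ := by
      have e2 : (Ωn n ω)⁻¹ = Ωm⁻¹ - (Ωn n ω)⁻¹ * ((Ωn n ω - Ωm) * Ωm⁻¹) := by
        rw [hkey]; abel
      have h1 : ‖(Ωn n ω)⁻¹‖ ≤ CΩ + Q * ‖(Ωn n ω)⁻¹‖ * (Q * ‖Ωn n ω - Ωm‖ * CΩ) := by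
        calc ‖(Ωn n ω)⁻¹‖ = ‖Ωm⁻¹ - (Ωn n ω)⁻¹ * ((Ωn n ω - Ωm) * Ωm⁻¹)‖ := by rw [← e2]
          _ ≤ ‖Ωm⁻¹‖ + ‖(Ωn n ω)⁻¹ * ((Ωn n ω - Ωm) * Ωm⁻¹)‖ := norm_sub_le _ _
          _ ≤ CΩ + Q * ‖(Ωn n ω)⁻¹‖ * (Q * ‖Ωn n ω - Ωm‖ * CΩ) := by
              have h2 : ‖(Ωn n ω)⁻¹ * ((Ωn n ω - Ωm) * Ωm⁻¹)‖
                  ≤ Q * ‖(Ωn n ω)⁻¹‖ * ‖(Ωn n ω - Ωm) * Ωm⁻¹‖ := norm_matMul_le _ _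
              have h3 : ‖(Ωn n ω - Ωm) * Ωm⁻¹‖ ≤ Q * ‖Ωn n ω - Ωm‖ * CΩ :=
                norm_matMul_le _ _
              have h4 := mul_le_mul_of_nonneg_left h3
                (by positivity : (0:ℝ) ≤ Q * ‖(Ωn n ω)⁻¹‖)
              linarith
      have h5 : Q * ‖(Ωn n ω)⁻¹‖ * (Q * ‖Ωn n ω - Ωm‖ * CΩ) ≤ (1/2) * ‖(Ωn n ω)⁻¹‖ := by
        have h6 : Q * ‖(Ωn n ω)⁻¹‖ * (Q * ‖Ωn n ω - Ωm‖ * CΩ)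
            = (Q ^ 2 * CΩ * ‖Ωn n ω - Ωm‖) * ‖(Ωn n ω)⁻¹‖ := by ring
        rw [h6]
        have h7 : Q ^ 2 * CΩ * ‖Ωn n ω - Ωm‖ ≤ 1/2 := by
          have := mul_le_mul_of_nonneg_left hsmall (by positivity : (0:ℝ) ≤ Q ^ 2 * CΩ)
          linarith
        exact mul_le_mul_of_nonneg_right h7 (norm_nonneg _)
      linarith
    -- matrix identities
    have hS1 : (G - Gn n ω)ᵀ * (Ωn n ω)⁻¹
          + Gᵀ * ((Ωn n ω)⁻¹ * ((Ωn n ω - Ωm) * Ωm⁻¹))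
        = Gᵀ * Ωm⁻¹ - (Gn n ω)ᵀ * (Ωn n ω)⁻¹ := by
      rw [hkey, Matrix.transpose_sub]
      simp only [Matrix.sub_mul, Matrix.mul_sub, Matrix.add_mul, Matrix.mul_add, Matrix.mul_assoc]
      abel
    have hMTeq : ((G - Gn n ω)ᵀ * (Ωn n ω)⁻¹
          + Gᵀ * ((Ωn n ω)⁻¹ * ((Ωn n ω - Ωm) * Ωm⁻¹))) * ((Ωn n ω - Ωm) * Ωm⁻¹)
        = Gᵀ * (Ωm⁻¹ * ((Ωn n ω - Ωm) * Ωm⁻¹))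
          - (Gn n ω)ᵀ * (Ωm⁻¹ - (Ωn n ω)⁻¹) := by
      calc ((G - Gn n ω)ᵀ * (Ωn n ω)⁻¹
            + Gᵀ * ((Ωn n ω)⁻¹ * ((Ωn n ω - Ωm) * Ωm⁻¹))) * ((Ωn n ω - Ωm) * Ωm⁻¹)
          = (Gᵀ * Ωm⁻¹ - (Gn n ω)ᵀ * (Ωn n ω)⁻¹) * ((Ωn n ω - Ωm) * Ωm⁻¹) := by rw [hS1]
        _ = Gᵀ * (Ωm⁻¹ * ((Ωn n ω - Ωm) * Ωm⁻¹))
            - (Gn n ω)ᵀ * ((Ωn n ω)⁻¹ * ((Ωn n ω - Ωm) * Ωm⁻¹)) := by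
            simp only [Matrix.sub_mul, Matrix.mul_sub, Matrix.add_mul, Matrix.mul_add,
              Matrix.mul_assoc]
            abel
        _ = Gᵀ * (Ωm⁻¹ * ((Ωn n ω - Ωm) * Ωm⁻¹))
            - (Gn n ω)ᵀ * (Ωm⁻¹ - (Ωn n ω)⁻¹) := by rw [hkey]
    have hTmat : (Gn n ω)ᵀ * (Ωn n ω)⁻¹ - Gᵀ * Ωm⁻¹ - (Gn n ω - G)ᵀ * Ωm⁻¹
          + Gᵀ * (Ωm⁻¹ * ((Ωn n ω - Ωm) * Ωm⁻¹))
        = ((G - Gn n ω)ᵀ * (Ωn n ω)⁻¹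
            + Gᵀ * ((Ωn n ω)⁻¹ * ((Ωn n ω - Ωm) * Ωm⁻¹))) * ((Ωn n ω - Ωm) * Ωm⁻¹) := by
      rw [hMTeq, Matrix.transpose_sub]
      simp only [Matrix.sub_mul, Matrix.mul_sub, Matrix.add_mul, Matrix.mul_add, Matrix.mul_assoc]
      abel
    have hTeq : (Gn n ω)ᵀ *ᵥ ((Ωn n ω)⁻¹ *ᵥ gn n ω)
          - Gᵀ *ᵥ (Ωm⁻¹ *ᵥ gn n ω)
          - (Gn n ω - G)ᵀ *ᵥ (Ωm⁻¹ *ᵥ gn n ω)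
          + Gᵀ *ᵥ (Ωm⁻¹ *ᵥ ((Ωn n ω - Ωm) *ᵥ (Ωm⁻¹ *ᵥ gn n ω)))
        = (((G - Gn n ω)ᵀ * (Ωn n ω)⁻¹
            + Gᵀ * ((Ωn n ω)⁻¹ * ((Ωn n ω - Ωm) * Ωm⁻¹))) * ((Ωn n ω - Ωm) * Ωm⁻¹))
            *ᵥ gn n ω := by
      simp only [Matrix.mulVec_mulVec]
      rw [← Matrix.sub_mulVec, ← Matrix.sub_mulVec, ← Matrix.add_mulVec, hTmat]
    -- norm chain
    have hSnorm : ‖(G - Gn n ω)ᵀ * (Ωn n ω)⁻¹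
          + Gᵀ * ((Ωn n ω)⁻¹ * ((Ωn n ω - Ωm) * Ωm⁻¹))‖
        ≤ K0 * (‖Gn n ω - G‖ + ‖Ωn n ω - Ωm‖) := by
      have h1 : ‖(G - Gn n ω)ᵀ * (Ωn n ω)⁻¹‖ ≤ Q * ‖Gn n ω - G‖ * (2 * CΩ) := by
        calc ‖(G - Gn n ω)ᵀ * (Ωn n ω)⁻¹‖
            ≤ Q * ‖(G - Gn n ω)ᵀ‖ * ‖(Ωn n ω)⁻¹‖ := norm_matMul_le _ _
          _ = Q * ‖Gn n ω - G‖ * ‖(Ωn n ω)⁻¹‖ := by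
              rw [norm_transpose_eq, norm_sub_rev]
          _ ≤ Q * ‖Gn n ω - G‖ * (2 * CΩ) :=
              mul_le_mul_of_nonneg_left hWi_norm (by positivity)
      have h3 : ‖(Ωn n ω - Ωm) * Ωm⁻¹‖ ≤ Q * ‖Ωn n ω - Ωm‖ * CΩ := norm_matMul_le _ _
      have h4 : ‖(Ωn n ω)⁻¹ * ((Ωn n ω - Ωm) * Ωm⁻¹)‖
          ≤ Q * (2 * CΩ) * (Q * ‖Ωn n ω - Ωm‖ * CΩ) := by
        calc ‖(Ωn n ω)⁻¹ * ((Ωn n ω - Ωm) * Ωm⁻¹)‖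
            ≤ Q * ‖(Ωn n ω)⁻¹‖ * ‖(Ωn n ω - Ωm) * Ωm⁻¹‖ := norm_matMul_le _ _
          _ ≤ Q * (2 * CΩ) * (Q * ‖Ωn n ω - Ωm‖ * CΩ) := by
              have := mul_le_mul (mul_le_mul_of_nonneg_left hWi_norm hQ) h3
                (norm_nonneg _) (by positivity)
              linarith
      have h2 : ‖Gᵀ * ((Ωn n ω)⁻¹ * ((Ωn n ω - Ωm) * Ωm⁻¹))‖
          ≤ Q * CG * (Q * (2 * CΩ) * (Q * ‖Ωn n ω - Ωm‖ * CΩ)) := by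
        calc ‖Gᵀ * ((Ωn n ω)⁻¹ * ((Ωn n ω - Ωm) * Ωm⁻¹))‖
            ≤ Q * ‖Gᵀ‖ * ‖(Ωn n ω)⁻¹ * ((Ωn n ω - Ωm) * Ωm⁻¹)‖ := norm_matMul_le _ _
          _ ≤ Q * CG * (Q * (2 * CΩ) * (Q * ‖Ωn n ω - Ωm‖ * CΩ)) := by
              rw [← hCGdef]
              exact mul_le_mul_of_nonneg_left h4 (by positivity)
      have t1 : (0:ℝ) ≤ Q * CΩ * ‖Ωn n ω - Ωm‖ := by positivity
      have t2 : (0:ℝ) ≤ Q ^ 3 * CG * CΩ ^ 2 * ‖Gn n ω - G‖ := by positivity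
      calc ‖(G - Gn n ω)ᵀ * (Ωn n ω)⁻¹ + Gᵀ * ((Ωn n ω)⁻¹ * ((Ωn n ω - Ωm) * Ωm⁻¹))‖
          ≤ ‖(G - Gn n ω)ᵀ * (Ωn n ω)⁻¹‖
            + ‖Gᵀ * ((Ωn n ω)⁻¹ * ((Ωn n ω - Ωm) * Ωm⁻¹))‖ := norm_add_le _ _
        _ ≤ Q * ‖Gn n ω - G‖ * (2 * CΩ)
            + Q * CG * (Q * (2 * CΩ) * (Q * ‖Ωn n ω - Ωm‖ * CΩ)) := by linarith
        _ ≤ K0 * (‖Gn n ω - G‖ + ‖Ωn n ω - Ωm‖) := by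
            rw [hK0def]
            nlinarith [t1, t2]
    have hMTnorm : ‖(((G - Gn n ω)ᵀ * (Ωn n ω)⁻¹
          + Gᵀ * ((Ωn n ω)⁻¹ * ((Ωn n ω - Ωm) * Ωm⁻¹))) * ((Ωn n ω - Ωm) * Ωm⁻¹))‖
        ≤ Q * (K0 * (‖Gn n ω - G‖ + ‖Ωn n ω - Ωm‖)) * (Q * ‖Ωn n ω - Ωm‖ * CΩ) := by
      have h3 : ‖(Ωn n ω - Ωm) * Ωm⁻¹‖ ≤ Q * ‖Ωn n ω - Ωm‖ * CΩ := norm_matMul_le _ _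
      calc ‖(((G - Gn n ω)ᵀ * (Ωn n ω)⁻¹
            + Gᵀ * ((Ωn n ω)⁻¹ * ((Ωn n ω - Ωm) * Ωm⁻¹))) * ((Ωn n ω - Ωm) * Ωm⁻¹))‖
          ≤ Q * ‖(G - Gn n ω)ᵀ * (Ωn n ω)⁻¹
              + Gᵀ * ((Ωn n ω)⁻¹ * ((Ωn n ω - Ωm) * Ωm⁻¹))‖ * ‖(Ωn n ω - Ωm) * Ωm⁻¹‖ :=
            norm_matMul_le _ _
        _ ≤ Q * (K0 * (‖Gn n ω - G‖ + ‖Ωn n ω - Ωm‖)) * (Q * ‖Ωn n ω - Ωm‖ * CΩ) := by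
            have := mul_le_mul (mul_le_mul_of_nonneg_left hSnorm hQ) h3
              (norm_nonneg _) (by positivity)
            linarith
    -- put it together
    rw [hTeq]
    have hT : ‖(((G - Gn n ω)ᵀ * (Ωn n ω)⁻¹
          + Gᵀ * ((Ωn n ω)⁻¹ * ((Ωn n ω - Ωm) * Ωm⁻¹))) * ((Ωn n ω - Ωm) * Ωm⁻¹))
          *ᵥ gn n ω‖
        ≤ Q * ‖(((G - Gn n ω)ᵀ * (Ωn n ω)⁻¹
            + Gᵀ * ((Ωn n ω)⁻¹ * ((Ωn n ω - Ωm) * Ωm⁻¹))) * ((Ωn n ω - Ωm) * Ωm⁻¹))‖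
            * ‖gn n ω‖ := norm_mulVec_le _ _
    have hfval : ‖f n ω‖
        = K * ((‖Gn n ω - G‖ + ‖Ωn n ω - Ωm‖) * ‖Ωn n ω - Ωm‖) * ‖gn n ω‖ := by
      show |K * ((‖Gn n ω - G‖ + ‖Ωn n ω - Ωm‖) * ‖Ωn n ω - Ωm‖) * ‖gn n ω‖| = _
      rw [abs_of_nonneg (by positivity)]
    rw [hfval]
    have h8 : Q * ‖(((G - Gn n ω)ᵀ * (Ωn n ω)⁻¹
          + Gᵀ * ((Ωn n ω)⁻¹ * ((Ωn n ω - Ωm) * Ωm⁻¹))) * ((Ωn n ω - Ωm) * Ωm⁻¹))‖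
        ≤ K * ((‖Gn n ω - G‖ + ‖Ωn n ω - Ωm‖) * ‖Ωn n ω - Ωm‖) := by
      have h9 := mul_le_mul_of_nonneg_left hMTnorm hQ
      rw [hKdef]
      nlinarith [h9, mul_nonneg (add_nonneg (norm_nonneg (Gn n ω - G))
        (norm_nonneg (Ωn n ω - Ωm))) (norm_nonneg (Ωn n ω - Ωm))]
    calc ‖(((G - Gn n ω)ᵀ * (Ωn n ω)⁻¹
          + Gᵀ * ((Ωn n ω)⁻¹ * ((Ωn n ω - Ωm) * Ωm⁻¹))) * ((Ωn n ω - Ωm) * Ωm⁻¹))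
          *ᵥ gn n ω‖
        ≤ Q * ‖(((G - Gn n ω)ᵀ * (Ωn n ω)⁻¹
            + Gᵀ * ((Ωn n ω)⁻¹ * ((Ωn n ω - Ωm) * Ωm⁻¹))) * ((Ωn n ω - Ωm) * Ωm⁻¹))‖
            * ‖gn n ω‖ := hT
      _ ≤ K * ((‖Gn n ω - G‖ + ‖Ωn n ω - Ωm‖) * ‖Ωn n ω - Ωm‖) * ‖gn n ω‖ :=
          mul_le_mul_of_nonneg_right h8 (norm_nonneg _)
  exact ⟨goal1, goal2, goal3, goal4⟩

end
end
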